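/- arXiv:2412.15457 — 5 statements merged into one kernel-verified Lean document; each statement's English description precedes it below -/
import Mathlib

section
/- If G is a digraph on a vertex set V of size n ≥ 2 that is the disjoint union of n−1 spanning arborescences A_1, ..., A_{n−1} all rooted at the same vertex r, then G contains a rainbow spanning arborescence (a spanning arborescence using exactly one arc from each A_i), and it is rooted at r. -/
/-!
Grow the rainbow arborescence greedily from `{r}`. While the current tree `T` misses some
vertex, pick an unused colour `i`: since `A i` reaches every vertex from `r ∈ T`, some arc of
`A i` leaves `T`, and attaching it keeps `T` an arborescence rooted at `r`. Each step uses one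
new colour and adds one vertex, so the `n - 1` colours give exactly a spanning arborescence.
-/

open Finset

variable {V : Type*}

/-- `A` is the arc set of an arborescence on vertex set `U` rooted at `r`:
all arcs lie within `U`, the root has no incoming arc, every other vertex of `U`
has exactly one incoming arc, and every vertex of `U` is reachable from `r`. -/
def IsArborOn [DecidableEq V] (U : Finset V) (A : Finset (V × V)) (r : V) : Prop :=
  r ∈ U ∧ (∀ e ∈ A, e.1 ∈ U ∧ e.2 ∈ U) ∧ (∀ e ∈ A, e.2 ≠ r) ∧
  (∀ v ∈ U, v ≠ r → (A.filter (fun e => e.2 = v)).card = 1) ∧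
  (∀ v ∈ U, Relation.ReflTransGen (fun a b => (a, b) ∈ A) r v)

/-- A spanning arborescence on the whole (finite) vertex type. -/
def IsSpanningArbor [Fintype V] [DecidableEq V] (A : Finset (V × V)) (r : V) : Prop :=
  IsArborOn Finset.univ A r

/-- `B` is rainbow w.r.t. the colored arc sets `A 0, …, A (k-1)`:
each arc of `B` can be assigned a color whose class contains it, with all
assigned colors distinct (i.e. at most one arc from each color). -/
def IsRainbowOf {k : ℕ} (A : Fin k → Finset (V × V)) (B : Finset (V × V)) : Prop :=
  ∃ c : V × V → Fin k, Set.InjOn c ↑B ∧ ∀ e ∈ B, e ∈ A (c e)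

variable {ι : Type*}

lemma Relation.ReflTransGen.exists_step_mem_notMem {R : V → V → Prop} {S : Set V} {a b : V}
    (h : Relation.ReflTransGen R a b) (ha : a ∈ S) (hb : b ∉ S) :
    ∃ x ∈ S, ∃ y ∉ S, R x y := by
  induction h with
  | refl => exact absurd ha hb
  | @tail y z _ hyz ih =>
    by_cases hy : y ∈ S
    · exact ⟨y, hy, z, hb, hyz⟩
    · exact ih hy

lemma IsArborOn.singleton [DecidableEq V] (r : V) : IsArborOn {r} ∅ r :=
  ⟨mem_singleton_self r, by simp, by simp, fun v hv hvr => absurd (mem_singleton.mp hv) hvr,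
    fun v hv => mem_singleton.mp hv ▸ Relation.ReflTransGen.refl⟩

lemma IsArborOn.insert_arc [DecidableEq V] {U : Finset V} {B : Finset (V × V)} {r a b : V}
    (hT : IsArborOn U B r) (ha : a ∈ U) (hb : b ∉ U) :
    IsArborOn (insert b U) (insert (a, b) B) r := by
  obtain ⟨hr, hBU, hBr, hdeg, hreach⟩ := hT
  have hbr : b ≠ r := fun h => hb (h ▸ hr)
  have hB_notin : ∀ e ∈ B, e.2 ≠ b := fun e he h => hb (h ▸ (hBU e he).2)
  refine ⟨mem_insert_of_mem hr, ?_, ?_, ?_, ?_⟩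
  · simp only [mem_insert, forall_eq_or_imp, true_or, and_true]
    exact ⟨Or.inr ha, fun e he => ⟨Or.inr (hBU e he).1, Or.inr (hBU e he).2⟩⟩
  · simpa only [mem_insert, forall_eq_or_imp] using ⟨hbr, hBr⟩
  · intro v hv hvr
    rw [filter_insert]
    rcases eq_or_ne b v with rfl | hvb
    · rw [if_pos rfl, filter_false_of_mem hB_notin]
      rfl
    · rw [if_neg hvb]
      exact hdeg v ((mem_insert.mp hv).resolve_left hvb.symm) hvr
  · have hmono := Relation.ReflTransGen.mono
      (r := fun x y => (x, y) ∈ B) (p := fun x y => (x, y) ∈ insert (a, b) B)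
      (fun _ _ => mem_insert_of_mem)
    intro v hv
    rcases mem_insert.mp hv with rfl | hv
    · exact (hmono _ _ (hreach a ha)).tail (mem_insert_self _ _)
    · exact hmono _ _ (hreach v hv)

def IsRainbowColoring (A : ι → Finset (V × V)) (C : Set ι) (B : Finset (V × V))
    (c : V × V → ι) : Prop :=
  Set.InjOn c B ∧ Set.MapsTo c B C ∧ ∀ e ∈ B, e ∈ A (c e)

lemma IsRainbowColoring.insert [DecidableEq V] {A : ι → Finset (V × V)} {C : Set ι}
    {B : Finset (V × V)} {c : V × V → ι} {e : V × V} {i : ι}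
    (hc : IsRainbowColoring A C B c) (he : e ∉ B) (hi : i ∉ C) (heA : e ∈ A i) :
    IsRainbowColoring A (insert i C) (insert e B) (Function.update c e i) := by
  obtain ⟨hinj, hmaps, hmem⟩ := hc
  have hagree : Set.EqOn (Function.update c e i) c B :=
    fun x hx => Function.update_of_ne (ne_of_mem_of_not_mem hx he) _ _
  refine ⟨?_, ?_, ?_⟩
  · rw [coe_insert, Set.injOn_insert (mem_coe.not.mpr he), hagree.image_eq,
      Function.update_self]
    exact ⟨hinj.congr hagree.symm, fun ⟨x, hx, hxi⟩ => hi (hxi ▸ hmaps hx)⟩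
  · intro x hx
    rcases mem_insert.mp hx with rfl | hx
    · simp
    · rw [hagree hx]
      exact Set.mem_insert_of_mem _ (hmaps hx)
  · intro x hx
    rcases mem_insert.mp hx with rfl | hx
    · simpa using heA
    · rw [hagree hx]
      exact hmem x hx

lemma exists_rainbow_arborOn [Fintype V] [DecidableEq V] [DecidableEq ι] [Nonempty ι]
    (A : ι → Finset (V × V)) (r : V)
    (hreach : ∀ i v, Relation.ReflTransGen (fun a b => (a, b) ∈ A i) r v)
    (C : Finset ι) (hC : #C < Fintype.card V) :
    ∃ (U : Finset V) (B : Finset (V × V)) (c : V × V → ι),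
      IsArborOn U B r ∧ #U = #C + 1 ∧ IsRainbowColoring A C B c := by
  induction C using Finset.induction_on with
  | empty =>
    exact ⟨{r}, ∅, fun _ => Classical.arbitrary ι, IsArborOn.singleton r, rfl, by
      simp [IsRainbowColoring]⟩
  | insert i C hi ih =>
    rw [card_insert_of_notMem hi] at hC ⊢
    obtain ⟨U, B, c, hT, hU, hc⟩ := ih (by omega)
    obtain ⟨v, -, hv⟩ : ∃ v ∈ univ, v ∉ U :=
      exists_mem_notMem_of_card_lt_card (by rw [card_univ]; omega)
    obtain ⟨a, ha, b, hb, hab⟩ := (hreach i v).exists_step_mem_notMem (S := ↑U) hT.1 hv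
    have hab_notMem : (a, b) ∉ B := fun h => hb (hT.2.1 _ h).2
    refine ⟨insert b U, insert (a, b) B, Function.update c (a, b) i,
      hT.insert_arc ha hb, by rw [card_insert_of_notMem hb, hU], ?_⟩
    rw [coe_insert]
    exact hc.insert hab_notMem (mem_coe.not.mpr hi) hab

theorem stmt0 [Fintype V] [DecidableEq V] (hn : 2 ≤ Fintype.card V)
    (A : Fin (Fintype.card V - 1) → Finset (V × V)) (r : V)
    (hA : ∀ i, IsSpanningArbor (A i) r) :
    ∃ B : Finset (V × V), IsSpanningArbor B r ∧ IsRainbowOf A B := by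
  have : Nonempty (Fin (Fintype.card V - 1)) := ⟨⟨0, by omega⟩⟩
  obtain ⟨U, B, c, hT, hU, hinj, -, hmem⟩ :=
    exists_rainbow_arborOn A r (fun i v => (hA i).2.2.2.2 v (mem_univ v)) univ
      (by rw [card_univ, Fintype.card_fin]; omega)
  have hU_univ : U = univ :=
    eq_univ_of_card U (by rw [hU, card_univ, Fintype.card_fin]; omega)
  subst hU_univ
  exact ⟨B, hT, c, hinj, hmem⟩
end

section
/- Let T be a tree on vertex set V with |V| = n ≥ 2, and let A_1,...,A_{n−1} be spanning arborescences on V each of which is an orientation of T (i.e., the underlying undirected graph of each A_i equals T). Let G be their disjoint union. Then G contains a rainbow spanning arborescence, i.e., a spanning arborescence using exactly one arc from each A_i. -/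
open Finset

variable {V : Type*}

/-!
Induction on the number of vertices. A non-root vertex `v` without out-arcs in one arborescence
`A i₀` is a leaf of the common underlying tree; let `u` be its neighbour. Deleting `v` from every
other arborescence (re-rooting at `u` where `v` was the root) leaves one arborescence fewer on one
vertex fewer, all orienting the same tree. A rainbow arborescence for these, extended by the arc
`(u, v)` coloured `i₀`, is rainbow for the whole family.
-/

section Arborescence

variable [DecidableEq V] {U : Finset V} {A : Finset (V × V)} {r : V}

def removeVertex (v : V) (A : Finset (V × V)) : Finset (V × V) :=
  A.filter fun e => e.1 ≠ v ∧ e.2 ≠ v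

lemma mem_removeVertex {v : V} {e : V × V} :
    e ∈ removeVertex v A ↔ e ∈ A ∧ e.1 ≠ v ∧ e.2 ≠ v :=
  mem_filter

namespace IsArborOn

lemma eq_of_snd_eq (hA : IsArborOn U A r) {e e' : V × V} (he : e ∈ A) (he' : e' ∈ A)
    (h : e.2 = e'.2) : e = e' := by
  obtain ⟨x, hx⟩ := card_eq_one.mp (hA.2.2.2.1 e.2 (hA.2.1 e he).2 (hA.2.2.1 e he))
  have hfib : ∀ f ∈ A, f.2 = e.2 → f = x := fun f hf hfe => by
    simpa [hx] using (mem_filter.mpr ⟨hf, hfe⟩ : f ∈ A.filter fun f => f.2 = e.2)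
  exact (hfib e he rfl).trans (hfib e' he' h.symm).symm

lemma exists_mem_snd_eq (hA : IsArborOn U A r) {v : V} (hv : v ∈ U) (hvr : v ≠ r) :
    ∃ u, (u, v) ∈ A := by
  obtain ⟨x, hx⟩ := card_pos.mp (hA.2.2.2.1 v hv hvr ▸ one_pos)
  obtain ⟨hxA, rfl⟩ := mem_filter.mp hx
  exact ⟨x.1, hxA⟩

lemma swap_notMem (hA : IsArborOn U A r) {a b : V} (hab : (a, b) ∈ A) : (b, a) ∉ A := by
  intro hba
  -- The only arc into `a` comes from `b` and vice versa, so neither is reachable from the root.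
  suffices ∀ w, Relation.ReflTransGen (fun x y => (x, y) ∈ A) r w → w ≠ a ∧ w ≠ b from
    (this a (hA.2.2.2.2 a (hA.2.1 _ hab).1)).1 rfl
  intro w hw
  induction hw with
  | refl => exact ⟨(hA.2.2.1 _ hba).symm, (hA.2.2.1 _ hab).symm⟩
  | tail _ hxy ih =>
    constructor
    · rintro rfl; exact ih.2 (congrArg Prod.fst (hA.eq_of_snd_eq hxy hba rfl))
    · rintro rfl; exact ih.1 (congrArg Prod.fst (hA.eq_of_snd_eq hxy hab rfl))

lemma card_add_one (hA : IsArborOn U A r) : A.card + 1 = U.card := by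
  have hfib : A.card = ∑ w ∈ U, (A.filter fun e => e.2 = w).card :=
    card_eq_sum_card_fiberwise fun e he => (hA.2.1 e he).2
  rw [← add_sum_erase _ _ hA.1, filter_false_of_mem fun e he => hA.2.2.1 e he,
    sum_congr rfl fun w hw => hA.2.2.2.1 w (mem_of_mem_erase hw) (ne_of_mem_erase hw),
    card_empty, sum_const, smul_eq_mul, mul_one, card_erase_of_mem hA.1] at hfib
  have := card_pos.mpr ⟨r, hA.1⟩
  omega

lemma exists_leaf (hA : IsArborOn U A r) (hU : 2 ≤ U.card) :
    ∃ v ∈ U, v ≠ r ∧ ∀ e ∈ A, e.1 ≠ v := by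
  by_contra! h
  have hr : r ∈ A.image Prod.fst := by
    obtain ⟨b, hb, hbr⟩ := exists_mem_ne hU r
    obtain hrb | ⟨c, hrc, -⟩ := (hA.2.2.2.2 b hb).cases_head
    · exact absurd hrb.symm hbr
    · exact mem_image_of_mem _ hrc
  have hsub : U ⊆ A.image Prod.fst := fun v hv => by
    by_cases hvr : v = r
    · exact hvr ▸ hr
    · obtain ⟨e, he, rfl⟩ := h v hv hvr
      exact mem_image_of_mem _ he
  have := (card_le_card hsub).trans card_image_le
  have := hA.card_add_one
  omega

lemma removeVertex_leaf (hA : IsArborOn U A r) {u v : V}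
    (hnbr : ∀ w, (v, w) ∈ A ∨ (w, v) ∈ A ↔ w = u) :
    IsArborOn (U.erase v) (removeVertex v A) (if r = v then u else r) := by
  set r' := if r = v then u else r with hr'
  have hu : u ∈ U ∧ u ≠ v := by
    obtain h | h := (hnbr u).mpr rfl
    · exact ⟨(hA.2.1 _ h).2, fun huv => hA.swap_notMem (huv ▸ h) (huv ▸ h)⟩
    · exact ⟨(hA.2.1 _ h).1, fun huv => hA.swap_notMem (huv ▸ h) (huv ▸ h)⟩
  have hout : ∀ w, (v, w) ∈ A → w = r' := by
    intro w hw
    obtain rfl := (hnbr w).mp (Or.inl hw)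
    rw [hr']
    split_ifs with hrv
    · rfl
    · obtain ⟨x, hx⟩ := hA.exists_mem_snd_eq (hA.2.1 _ hw).1 (Ne.symm hrv)
      obtain rfl := (hnbr x).mp (Or.inr hx)
      exact absurd hw (hA.swap_notMem hx)
  have hr'r : r' ≠ r → r = v := by
    rw [hr']; split_ifs with hrv <;> simp [hrv]
  refine ⟨?_, fun e he => ?_, fun e he her => ?_, fun w hw hwr' => ?_, fun w hw => ?_⟩
  · rw [hr']
    split_ifs with hrv
    · exact mem_erase.mpr ⟨hu.2, hu.1⟩
    · exact mem_erase.mpr ⟨hrv, hA.1⟩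
  · obtain ⟨heA, h1, h2⟩ := mem_removeVertex.mp he
    exact ⟨mem_erase.mpr ⟨h1, (hA.2.1 e heA).1⟩, mem_erase.mpr ⟨h2, (hA.2.1 e heA).2⟩⟩
  · obtain ⟨heA, h1, -⟩ := mem_removeVertex.mp he
    by_cases hrr : r' = r
    · exact hA.2.2.1 e heA (her.trans hrr)
    · have hrv := hr'r hrr
      have hvu : (v, u) ∈ A := ((hnbr u).mpr rfl).resolve_right fun h => hA.2.2.1 _ h hrv.symm
      have hr'u : r' = u := by rw [hr', if_pos hrv]
      exact h1 (congrArg Prod.fst (hA.eq_of_snd_eq heA hvu (her.trans hr'u)))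
  · have hwv := ne_of_mem_erase hw
    have hwr : w ≠ r := fun hwr => hwv (hwr.trans (hr'r (hwr ▸ hwr'.symm)))
    have hfilter : (removeVertex v A).filter (fun e => e.2 = w) = A.filter (fun e => e.2 = w) := by
      ext ⟨x, y⟩
      simp only [mem_filter, mem_removeVertex]
      constructor
      · rintro ⟨⟨h, -⟩, hy⟩
        exact ⟨h, hy⟩
      · rintro ⟨h, rfl⟩
        refine ⟨⟨h, ?_, hwv⟩, rfl⟩
        rintro rfl
        exact hwr' (hout y h)
    rw [hfilter]
    exact hA.2.2.2.1 w (mem_of_mem_erase hw) hwr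
  · have hreach : ∀ x, Relation.ReflTransGen (fun a b => (a, b) ∈ A) r x → x ≠ v →
        Relation.ReflTransGen (fun a b => (a, b) ∈ removeVertex v A) r' x := by
      intro x hx
      induction hx with
      | refl => intro hrv; rw [hr', if_neg hrv]
      | @tail b y _ hby ih =>
        intro hyv
        by_cases hbv : b = v
        · rw [hbv] at hby
          rw [hout y hby]
        · exact (ih hbv).tail (mem_removeVertex.mpr ⟨hby, hbv, hyv⟩)
    exact hreach w (hA.2.2.2.2 w (mem_of_mem_erase hw)) (ne_of_mem_erase hw)

lemma insert_leaf (hA : IsArborOn U A r) {u v : V} (hu : u ∈ U) (hv : v ∉ U) :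
    IsArborOn (insert v U) (insert (u, v) A) r := by
  have hvA : ∀ e ∈ A, e.1 ≠ v ∧ e.2 ≠ v := fun e he =>
    ⟨ne_of_mem_of_not_mem (hA.2.1 e he).1 hv, ne_of_mem_of_not_mem (hA.2.1 e he).2 hv⟩
  have hreach : Relation.ReflTransGen (fun x y => (x, y) ∈ A) ≤
      Relation.ReflTransGen (fun x y => (x, y) ∈ insert (u, v) A) :=
    Relation.ReflTransGen.mono fun _ _ => mem_insert_of_mem
  refine ⟨mem_insert_of_mem hA.1, ?_, ?_, fun w hw hwr => ?_, fun w hw => ?_⟩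
  · simp only [forall_mem_insert]
    exact ⟨⟨mem_insert_of_mem hu, mem_insert_self v U⟩,
      fun e he => ⟨mem_insert_of_mem (hA.2.1 e he).1, mem_insert_of_mem (hA.2.1 e he).2⟩⟩
  · simp only [forall_mem_insert]
    exact ⟨ne_of_mem_of_not_mem hA.1 hv |>.symm, hA.2.2.1⟩
  · obtain rfl | hw := mem_insert.mp hw
    · rw [filter_insert, if_pos rfl, filter_false_of_mem fun e he => (hvA e he).2]
      rfl
    · rw [filter_insert, if_neg (ne_of_mem_of_not_mem hw hv).symm]
      exact hA.2.2.2.1 w hw hwr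
  · obtain rfl | hw := mem_insert.mp hw
    · exact (hreach _ u (hA.2.2.2.2 u hu)).tail (mem_insert_self _ _)
    · exact hreach _ w (hA.2.2.2.2 w hw)

end IsArborOn

end Arborescence

section Rainbow

variable {ι : Type*}

def IsRainbowOn (S : Finset ι) (A : ι → Finset (V × V)) (B : Finset (V × V)) : Prop :=
  ∃ c : V × V → ι, Set.InjOn c B ∧ ∀ e ∈ B, c e ∈ S ∧ e ∈ A (c e)

lemma IsRainbowOn.mono {S : Finset ι} {A A' : ι → Finset (V × V)} {B : Finset (V × V)}
    (hB : IsRainbowOn S A B) (hAA' : ∀ i ∈ S, A i ⊆ A' i) : IsRainbowOn S A' B :=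
  let ⟨c, hinj, hc⟩ := hB
  ⟨c, hinj, fun e he => ⟨(hc e he).1, hAA' _ (hc e he).1 (hc e he).2⟩⟩

lemma IsRainbowOn.insert [DecidableEq ι] [DecidableEq V] {S : Finset ι}
    {A : ι → Finset (V × V)} {B : Finset (V × V)} {i : ι} {e : V × V}
    (hB : IsRainbowOn (S.erase i) A B) (he : e ∉ B) (hi : i ∈ S) (hei : e ∈ A i) :
    IsRainbowOn S A (insert e B) := by
  obtain ⟨c, hinj, hc⟩ := hB
  have hupd : Set.EqOn (Function.update c e i) c B := fun x hx =>
    Function.update_of_ne (ne_of_mem_of_not_mem hx he) _ _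
  refine ⟨Function.update c e i, ?_, ?_⟩
  · rw [coe_insert, Set.injOn_insert (mod_cast he)]
    refine ⟨hinj.congr hupd.symm, ?_⟩
    rintro ⟨x, hx, hxe⟩
    rw [Function.update_self, hupd hx] at *
    exact (mem_erase.mp (hc x hx).1).1 hxe
  · intro x hx
    obtain rfl | hx := mem_insert.mp hx
    · simpa using ⟨hi, hei⟩
    · rw [hupd hx]
      exact ⟨mem_of_mem_erase (hc x hx).1, (hc x hx).2⟩

end Rainbow

theorem exists_isArborOn_isRainbowOn {ι : Type*} [Nonempty ι] [DecidableEq ι] [DecidableEq V]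
    (R : V → V → Prop) (U : Finset V) (S : Finset ι) (A : ι → Finset (V × V)) (r : ι → V)
    (hU : U.Nonempty) (hcard : U.card ≤ S.card + 1)
    (hA : ∀ i ∈ S, IsArborOn U (A i) (r i))
    (hR : ∀ i ∈ S, ∀ a b, R a b ↔ (a, b) ∈ A i ∨ (b, a) ∈ A i) :
    ∃ B ρ, IsArborOn U B ρ ∧ IsRainbowOn S A B := by
  induction hn : U.card generalizing R U S A r with
  | zero => exact absurd hn (card_pos.mpr hU).ne'
  | succ n ih =>
  obtain rfl | hn0 := n.eq_zero_or_pos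
  · obtain ⟨x, rfl⟩ := card_eq_one.mp hn
    refine ⟨∅, x, ⟨mem_singleton_self x, by simp, by simp, by simp, fun w hw => ?_⟩,
      ⟨fun _ => Classical.arbitrary ι, by simp, by simp⟩⟩
    rw [mem_singleton.mp hw]
  obtain ⟨i₀, hi₀⟩ : S.Nonempty := card_pos.mp (by omega)
  obtain ⟨v, hv, hvr, hleaf⟩ := (hA i₀ hi₀).exists_leaf (by omega)
  obtain ⟨u, huv⟩ := (hA i₀ hi₀).exists_mem_snd_eq hv hvr
  have hnbr : ∀ i ∈ S, ∀ w, (v, w) ∈ A i ∨ (w, v) ∈ A i ↔ w = u := by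
    intro i hi w
    rw [← hR i hi, hR i₀ hi₀]
    refine ⟨fun h => ?_, fun h => h ▸ Or.inr huv⟩
    obtain h | h := h
    · exact absurd rfl (hleaf _ h)
    · exact congrArg Prod.fst ((hA i₀ hi₀).eq_of_snd_eq h huv rfl)
  have hu : u ∈ U.erase v :=
    mem_erase.mpr ⟨fun h => (hA i₀ hi₀).swap_notMem (h ▸ huv) (h ▸ huv),
      ((hA i₀ hi₀).2.1 _ huv).1⟩
  obtain ⟨B, ρ, hB, hBS⟩ := ih (fun a b => R a b ∧ a ≠ v ∧ b ≠ v) (U.erase v) (S.erase i₀)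
    (fun i => removeVertex v (A i)) (fun i => if r i = v then u else r i) ⟨u, hu⟩
    (by rw [card_erase_of_mem hv, card_erase_of_mem hi₀]; omega)
    (fun i hi => (hA i (mem_of_mem_erase hi)).removeVertex_leaf (hnbr i (mem_of_mem_erase hi)))
    (fun i hi a b => by simp only [mem_removeVertex, hR i (mem_of_mem_erase hi)]; tauto)
    (by rw [card_erase_of_mem hv, hn]; rfl)
  refine ⟨insert (u, v) B, ρ, ?_,
    (hBS.mono fun i _ => filter_subset _ _).insert (fun h => ?_) hi₀ huv⟩
  · simpa only [insert_erase hv] using hB.insert_leaf hu (notMem_erase v U)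
  · exact ne_of_mem_erase (hB.2.1 _ h).2 rfl

theorem stmt10_general [Fintype V] [DecidableEq V] (hn : 2 ≤ Fintype.card V)
    (T : SimpleGraph V)
    (A : Fin (Fintype.card V - 1) → Finset (V × V)) (r : Fin (Fintype.card V - 1) → V)
    (hA : ∀ i, IsSpanningArbor (A i) (r i))
    (hor : ∀ i, ∀ u v : V, T.Adj u v ↔ ((u, v) ∈ A i ∨ (v, u) ∈ A i)) :
    ∃ (B : Finset (V × V)) (r' : V), IsSpanningArbor B r' ∧ IsRainbowOf A B := by
  have : Nonempty (Fin (Fintype.card V - 1)) := ⟨⟨0, by omega⟩⟩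
  have : Nonempty V := Fintype.card_pos_iff.mp (by omega)
  obtain ⟨B, ρ, hB, c, hinj, hc⟩ := exists_isArborOn_isRainbowOn T.Adj univ univ A r
    univ_nonempty (by simp only [card_univ, Fintype.card_fin]; omega)
    (fun i _ => hA i) (fun i _ => hor i)
  exact ⟨B, ρ, hB, c, hinj, fun e he => (hc e he).2⟩

theorem stmt10 [Fintype V] [DecidableEq V] (hn : 2 ≤ Fintype.card V)
    (T : SimpleGraph V) (hT : T.IsTree)
    (A : Fin (Fintype.card V - 1) → Finset (V × V)) (r : Fin (Fintype.card V - 1) → V)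
    (hA : ∀ i, IsSpanningArbor (A i) (r i))
    (hor : ∀ i, ∀ u v : V, T.Adj u v ↔ ((u, v) ∈ A i ∨ (v, u) ∈ A i)) :
    ∃ (B : Finset (V × V)) (r' : V), IsSpanningArbor B r' ∧ IsRainbowOf A B :=
  stmt10_general hn T A r hA hor
end

section
/- Let G on vertex set V (|V| = n ≥ 2) be the disjoint union of k spanning arborescences A_1,...,A_k with k ≥ 2n−3. Then G contains a rainbow spanning arborescence, i.e., a spanning arborescence using at most one arc from each A_i. -/
open Finset

variable {V : Type*}

/-!
Induction on the vertex set. Delete a vertex `v` by contracting it, in every colour class, into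
its parent (into an arbitrary other vertex if `v` is the root), and take a rainbow arborescence of
the contracted instance on `n - 1` vertices. Its `n - 2` arcs lift to arcs of the original classes
that form two rainbow arborescences covering `V`, one rooted at `v` and one at the old root, and
leave at least `k - (n - 2) ≥ n - 1` colours unused. If the trees have `t` and `m` vertices, then
`t + m = n` forces either `m` unused colours to be rooted in the first tree or `t` in the second.
That tree is then grown greedily: a colour class rooted inside the current tree is spanning, so
it has an arc leaving the tree.
-/

namespace Relation.ReflTransGen

variable {α : Type*} {r s : α → α → Prop} {a b c : α}

theorem or_of_forall_step (h : ∀ x y, r x y → s x y ∨ s b y) (hac : ReflTransGen r a c) :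
    ReflTransGen s a c ∨ ReflTransGen s b c := by
  induction hac with
  | refl => exact .inl .refl
  | tail _ hxy ih =>
    rcases h _ _ hxy with hs | hs
    · exact ih.imp (·.tail hs) (·.tail hs)
    · exact .inr (.single hs)

theorem and_reachable (hac : ReflTransGen r a c) :
    ReflTransGen (fun x y => r x y ∧ ReflTransGen r a y) a c := by
  induction hac with
  | refl => exact .refl
  | tail hab hxy ih => exact ih.tail ⟨hxy, hab.tail hxy⟩

theorem and_of_backward_closed {P : α → Prop} (hP : ∀ x y, r x y → P y → P x)
    (hac : ReflTransGen r a c) (hc : P c) : ReflTransGen (fun x y => r x y ∧ P y) a c := by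
  induction hac with
  | refl => exact .refl
  | tail _ hxy ih => exact (ih (hP _ _ hxy hc)).tail ⟨hxy, hc⟩

end Relation.ReflTransGen

namespace RainbowArbor

open Relation

def Child (S : Finset V) (r : V) (p : V → V) (a b : V) : Prop :=
  b ∈ S ∧ b ≠ r ∧ p b = a

/-- `p` is the parent map of an arborescence on `S` rooted at `r`; its values at `r` and outside
`S` play no role. -/
def IsParentTree (S : Finset V) (r : V) (p : V → V) : Prop :=
  r ∈ S ∧ ∀ u ∈ S, ReflTransGen (Child S r p) r u

namespace IsParentTree

variable {S : Finset V} {r : V} {p : V → V}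

theorem mem_of_reflTransGen (h : IsParentTree S r p) {u : V}
    (hu : ReflTransGen (Child S r p) r u) : u ∈ S := by
  rcases hu.cases_tail with rfl | ⟨_, _, hc⟩
  exacts [h.1, hc.1]

theorem parent_mem (h : IsParentTree S r p) {u : V} (hu : u ∈ S) (hur : u ≠ r) : p u ∈ S := by
  rcases (h.2 u hu).cases_tail with rfl | ⟨c, hc, _, _, rfl⟩
  exacts [absurd rfl hur, h.mem_of_reflTransGen hc]

theorem exists_exit (h : IsParentTree S r p) {T : Finset V} (hr : r ∈ T) {u : V} (hu : u ∈ S)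
    (huT : u ∉ T) : ∃ b ∈ S, b ∉ T ∧ b ≠ r ∧ p b ∈ T := by
  by_contra! hexit
  have hT : ∀ x, ReflTransGen (Child S r p) r x → x ∈ T := by
    intro x hx
    induction hx with
    | refl => exact hr
    | tail _ hxy ih =>
      obtain ⟨hy, hyr, rfl⟩ := hxy
      by_contra hyT
      exact hexit _ hy hyT hyr ih
  exact huT (hT u (h.2 u hu))

end IsParentTree

variable [DecidableEq V]

def redirect (v z x : V) : V := if x = v then z else x

@[simp]
theorem redirect_self (v z : V) : redirect v z v = z := if_pos rfl

theorem redirect_of_ne {v z x : V} (h : x ≠ v) : redirect v z x = x := if_neg h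

theorem eq_redirect_or_eq (v z x : V) : x = redirect v z x ∨ x = v := by
  by_cases h : x = v
  exacts [.inr h, .inl (redirect_of_ne h).symm]

theorem ne_of_ne_redirect {v z x u : V} (huv : u ≠ v) (hu : u ≠ redirect v z x) : u ≠ x := by
  rcases eq_redirect_or_eq v z x with h | rfl
  exacts [h ▸ hu, huv]

namespace IsParentTree

variable {S : Finset V} {r : V} {p : V → V}

theorem parent_ne (h : IsParentTree S r p) {u : V} (hu : u ∈ S) (hur : u ≠ r) : p u ≠ u := by
  obtain ⟨b, hb, hbT, -, hpb⟩ :=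
    h.exists_exit (mem_erase.2 ⟨hur.symm, h.1⟩) hu (notMem_erase u S)
  obtain rfl : b = u := by simpa [hb] using hbT
  exact ne_of_mem_erase hpb

/-- `v` is merged into its parent `z`; when `v` is the root, any `z` works, because the pointer
of the new root `z` is discarded. -/
theorem contract (h : IsParentTree S r p) {v z : V} (hz : z ∈ S.erase v)
    (hzp : r ≠ v → p v = z) :
    IsParentTree (S.erase v) (redirect v z r) (redirect v z ∘ p) := by
  refine ⟨?_, fun u hu => ?_⟩
  · by_cases hrv : r = v
    · simpa [hrv] using hz
    · simpa [redirect_of_ne hrv] using mem_erase.2 ⟨hrv, h.1⟩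
  have key : ∀ x, ReflTransGen (Child S r p) r x →
      ReflTransGen (Child (S.erase v) (redirect v z r) (redirect v z ∘ p))
        (redirect v z r) (redirect v z x) := by
    intro x hx
    induction hx with
    | refl => exact .refl
    | @tail a c _ hac ih =>
      obtain ⟨hcS, hcr, rfl⟩ := hac
      by_cases hcv : c = v
      · have hpc : redirect v z (p c) = redirect v z c := by
          rw [hcv, redirect_self, hzp fun h => hcr (hcv.trans h.symm),
            redirect_of_ne (ne_of_mem_erase hz)]
        exact hpc ▸ ih
      rw [redirect_of_ne hcv]
      by_cases hcr' : c = redirect v z r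
      · rw [hcr']
      · exact ih.tail ⟨mem_erase.2 ⟨hcv, hcS⟩, hcr', rfl⟩
  simpa [redirect_of_ne (ne_of_mem_erase hu)] using key u (h.2 u (mem_of_mem_erase hu))

theorem exists_split {U : Finset V} {v ρ : V} {p q : V → V}
    (hp : IsParentTree (U.erase v) ρ p) (hv : v ∈ U)
    (hq : ∀ u ∈ (U.erase v).erase ρ, q u = p u ∨ q u = v) :
    ∃ T ⊆ U, IsParentTree T v q ∧ IsParentTree (U \ T) ρ q := by
  classical
  set E := Child (U.erase v) ρ q
  set T := U.filter (ReflTransGen E v)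
  have hvT : v ∈ T := mem_filter.2 ⟨hv, .refl⟩
  have hT_closed : ∀ a c, E a c → a ∈ T → c ∈ T := fun a c hac ha =>
    mem_filter.2 ⟨mem_of_mem_erase hac.1, (mem_filter.1 ha).2.tail hac⟩
  have hstep : ∀ a c, Child (U.erase v) ρ p a c → E a c ∨ E v c := by
    rintro a c ⟨hc, hcρ, rfl⟩
    rcases hq c (mem_erase.2 ⟨hcρ, hc⟩) with h | h
    exacts [.inl ⟨hc, hcρ, h⟩, .inr ⟨hc, hcρ, h⟩]
  refine ⟨T, filter_subset _ _, ⟨hvT, fun u hu => ?_⟩, ⟨?_, fun u hu => ?_⟩⟩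
  · refine ReflTransGen.mono ?_ _ _ (mem_filter.1 hu).2.and_reachable
    rintro a c ⟨⟨hc, hcρ, hqc⟩, hvc⟩
    exact ⟨mem_filter.2 ⟨mem_of_mem_erase hc, hvc⟩, ne_of_mem_erase hc, hqc⟩
  · refine mem_sdiff.2 ⟨mem_of_mem_erase hp.1, fun hρT => ?_⟩
    rcases (mem_filter.1 hρT).2.cases_tail with h | ⟨_, _, h⟩
    exacts [ne_of_mem_erase hp.1 h, h.2.1 rfl]
  · obtain ⟨huU, huT⟩ := mem_sdiff.1 hu
    have huv : u ≠ v := fun h => huT (h ▸ hvT)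
    have hE : ReflTransGen E ρ u :=
      ((hp.2 u (mem_erase.2 ⟨huv, huU⟩)).or_of_forall_step hstep).resolve_right
        fun h => huT (mem_filter.2 ⟨huU, h⟩)
    refine ReflTransGen.mono ?_ _ _ (hE.and_of_backward_closed (P := (· ∉ T))
      (fun a c hac hc ha => hc (hT_closed a c hac ha)) huT)
    rintro a c ⟨⟨hc, hcρ, hqc⟩, hcT⟩
    exact ⟨mem_sdiff.2 ⟨mem_of_mem_erase hc, hcT⟩, hcρ, hqc⟩

theorem isArborOn_image (h : IsParentTree S r p) :
    IsArborOn S ((S.erase r).image fun u => (p u, u)) r := by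
  refine ⟨h.1, ?_, ?_, fun u hu hur => ?_, fun u hu => ReflTransGen.mono ?_ _ _ (h.2 u hu)⟩
  · simp only [forall_mem_image, mem_erase]
    exact fun u ⟨hur, hu⟩ => ⟨h.parent_mem hu hur, hu⟩
  · simp only [forall_mem_image, mem_erase]
    exact fun u ⟨hur, _⟩ => hur
  · refine card_eq_one.2 ⟨(p u, u), ?_⟩
    ext ⟨a, b⟩
    simp only [mem_filter, mem_image, mem_erase, mem_singleton, Prod.mk.injEq]
    constructor
    · rintro ⟨⟨x, -, rfl, rfl⟩, rfl⟩
      exact ⟨rfl, rfl⟩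
    · rintro ⟨rfl, rfl⟩
      exact ⟨⟨_, ⟨hur, hu⟩, rfl, rfl⟩, rfl⟩
  · rintro a b ⟨hb, hbr, rfl⟩
    exact mem_image.2 ⟨b, mem_erase.2 ⟨hbr, hb⟩, rfl⟩

end IsParentTree

theorem _root_.IsArborOn.exists_isParentTree {U : Finset V} {A : Finset (V × V)} {r : V}
    (h : IsArborOn U A r) :
    ∃ p, IsParentTree U r p ∧ ∀ u ∈ U, u ≠ r → (p u, u) ∈ A := by
  obtain ⟨hr, hA, hAr, hdeg, hreach⟩ := h
  have hpar : ∀ u, ∃ a, u ∈ U → u ≠ r → (a, u) ∈ A := by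
    intro u
    by_cases hu : u ∈ U ∧ u ≠ r
    · obtain ⟨e, he⟩ := card_eq_one.1 (hdeg u hu.1 hu.2)
      have he' := mem_filter.1 (he ▸ mem_singleton_self e)
      exact ⟨e.1, fun _ _ => he'.2 ▸ he'.1⟩
    · exact ⟨r, fun hu' hur => absurd ⟨hu', hur⟩ hu⟩
  choose p hp using hpar
  refine ⟨p, ⟨hr, fun u hu => ReflTransGen.mono ?_ _ _ (hreach u hu)⟩, hp⟩
  intro a b hab
  have hb := (hA _ hab).2
  have hbr := hAr _ hab
  refine ⟨hb, hbr, ?_⟩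
  have := card_le_one.1 (hdeg b hb hbr).le _ (mem_filter.2 ⟨hp b hb hbr, rfl⟩) _
    (mem_filter.2 ⟨hab, rfl⟩)
  exact congrArg Prod.fst this

variable {k : ℕ} (P : Fin k → V → V) (rt : Fin k → V)

/-- Colour `i` is the arborescence with parent map `P i` and root `rt i`; in the rainbow tree,
each vertex `u ≠ w` takes its parent arc `(P (κ u) u, u)` from colour `κ u`. -/
structure IsRainbowTree (S : Finset V) (w : V) (κ : V → Fin k) : Prop where
  isParentTree : IsParentTree S w fun u => P (κ u) u
  injOn : Set.InjOn κ ↑(S.erase w)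
  ne_root : ∀ u ∈ S.erase w, u ≠ rt (κ u)

variable {P rt}

namespace IsRainbowTree

variable {S U : Finset V} {w : V} {κ : V → Fin k}

theorem extend (h : IsRainbowTree P rt S w κ) {i : Fin k} (hi : IsParentTree U (rt i) (P i))
    (hiS : rt i ∈ S) (hκi : ∀ u ∈ S.erase w, κ u ≠ i) {u : V} (hu : u ∈ U)
    (huS : u ∉ S) :
    ∃ b ∈ U, b ∉ S ∧ IsRainbowTree P rt (insert b S) w (Function.update κ b i) := by
  obtain ⟨b, hbU, hbS, hbr, hpb⟩ := hi.exists_exit hiS hu huS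
  refine ⟨b, hbU, hbS, ?_⟩
  set κ' := Function.update κ b i
  have hκ' : ∀ x ∈ S, κ' x = κ x := fun x hx =>
    Function.update_of_ne (fun hxb : x = b => hbS (hxb ▸ hx)) _ _
  have hbw : b ≠ w := fun hbw => hbS (hbw ▸ h.isParentTree.1)
  have hlift : ∀ x, ReflTransGen (Child S w fun u => P (κ u) u) w x →
      ReflTransGen (Child (insert b S) w fun u => P (κ' u) u) w x :=
    fun x => ReflTransGen.mono (fun a c ⟨hc, hcw, hpc⟩ =>
      ⟨mem_insert_of_mem hc, hcw, by rw [← hpc]; simp only [hκ' c hc]⟩) _ _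
  have herase : (insert b S).erase w = insert b (S.erase w) := erase_insert_of_ne hbw
  refine ⟨⟨mem_insert_of_mem h.isParentTree.1, fun u hu => ?_⟩, ?_, ?_⟩
  · rcases mem_insert.1 hu with rfl | hu
    · refine (hlift _ (h.isParentTree.2 _ hpb)).tail ⟨mem_insert_self _ _, hbw, ?_⟩
      simp [κ']
    · exact hlift u (h.isParentTree.2 u hu)
  · rw [herase, coe_insert, Set.injOn_insert (fun h => hbS (mem_of_mem_erase h))]
    refine ⟨h.injOn.congr fun x hx => (hκ' x (mem_of_mem_erase hx)).symm, ?_⟩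
    rintro ⟨x, hx, hxb⟩
    simp only [κ', Function.update_self] at hxb
    exact hκi x hx (hκ' x (mem_of_mem_erase hx) ▸ hxb)
  · rw [herase]
    intro x hx
    rcases mem_insert.1 hx with rfl | hx
    · simpa [κ'] using hbr
    · rw [hκ' x (mem_of_mem_erase hx)]
      exact h.ne_root x hx

theorem grow (hP : ∀ i, IsParentTree U (rt i) (P i)) {S : Finset V} {κ : V → Fin k}
    {F : Finset (Fin k)} (hSU : S ⊆ U) (h : IsRainbowTree P rt S w κ)
    (hFS : ∀ i ∈ F, rt i ∈ S) (hFκ : ∀ u ∈ S.erase w, κ u ∉ F)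
    (hcard : #(U \ S) ≤ #F) : ∃ κ', IsRainbowTree P rt U w κ' := by
  by_cases hUS : U ⊆ S
  · exact ⟨κ, subset_antisymm hSU hUS ▸ h⟩
  obtain ⟨u, huU, huS⟩ := not_subset.1 hUS
  have hu : u ∈ U \ S := mem_sdiff.2 ⟨huU, huS⟩
  obtain ⟨i, hi⟩ : F.Nonempty := card_pos.1 ((card_pos.2 ⟨u, hu⟩).trans_le hcard)
  obtain ⟨b, hbU, hbS, hb⟩ :=
    h.extend (hP i) (hFS i hi) (fun x hx hxi => hFκ x hx (hxi ▸ hi)) huU huS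
  have hsdiff : U \ insert b S = (U \ S).erase b := sdiff_insert U S b
  have hdec : #(U \ insert b S) < #(U \ S) := by
    rw [hsdiff]
    exact card_erase_lt_of_mem (mem_sdiff.2 ⟨hbU, hbS⟩)
  refine hb.grow hP (F := F.erase i) (insert_subset hbU hSU)
    (fun j hj => mem_insert_of_mem (hFS j (mem_of_mem_erase hj))) ?_ ?_
  · intro x hx
    by_cases hxb : x = b
    · simp [hxb]
    · rw [Function.update_of_ne hxb]
      exact fun hF => hFκ x (mem_erase.2 ⟨ne_of_mem_erase hx,
        (mem_insert.1 (mem_of_mem_erase hx)).resolve_left hxb⟩) (mem_of_mem_erase hF)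
  · rw [hsdiff, card_erase_of_mem (mem_sdiff.2 ⟨hbU, hbS⟩), card_erase_of_mem hi]
    omega
termination_by #(U \ S)

theorem of_contract {v ρ : V} {z : Fin k → V}
    (h : IsRainbowTree (fun i => redirect v (z i) ∘ P i) (fun i => redirect v (z i) (rt i))
      (U.erase v) ρ κ)
    (hS : IsParentTree S w fun u => P (κ u) u) (hSU : S.erase w ⊆ (U.erase v).erase ρ) :
    IsRainbowTree P rt S w κ :=
  ⟨hS, h.injOn.mono (coe_subset.2 hSU), fun u hu =>
    ne_of_ne_redirect (ne_of_mem_erase (mem_of_mem_erase (hSU hu))) (h.ne_root u (hSU hu))⟩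

theorem isRainbowOf {A : Fin k → Finset (V × V)}
    (hA : ∀ i, ∀ u ∈ S, u ≠ rt i → (P i u, u) ∈ A i) (h : IsRainbowTree P rt S w κ) :
    IsRainbowOf A ((S.erase w).image fun u => (P (κ u) u, u)) := by
  refine ⟨fun e => κ e.2, ?_, ?_⟩
  · simp only [coe_image, Set.InjOn, Set.forall_mem_image, Prod.mk.injEq]
    intro u hu u' hu' huu'
    obtain rfl := h.injOn hu hu' huu'
    exact ⟨rfl, rfl⟩
  · simp only [forall_mem_image]
    exact fun u hu => hA _ u (mem_of_mem_erase hu) (h.ne_root u hu)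

end IsRainbowTree

theorem exists_isRainbowTree_of_two_trees {U T : Finset V}
    (hP : ∀ i, IsParentTree U (rt i) (P i)) (hTU : T ⊆ U) {v ρ : V} {κ : V → Fin k}
    (hT : IsRainbowTree P rt T v κ)
    (hM : IsRainbowTree P rt (U \ T) ρ κ) {F : Finset (Fin k)}
    (hF : ∀ u ∈ T.erase v ∪ (U \ T).erase ρ, κ u ∉ F) (hcard : #U ≤ #F + 1) :
    ∃ w κ', IsRainbowTree P rt U w κ' := by
  have hsplitF := card_filter_add_card_filter_not (s := F) (fun i => rt i ∈ T)
  have hsplitU := card_sdiff_add_card_eq_card hTU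
  by_cases hgrowT : #(U \ T) ≤ #(F.filter fun i => rt i ∈ T)
  · exact ⟨v, hT.grow hP hTU (fun i hi => (mem_filter.1 hi).2)
      (fun u hu hi => hF u (mem_union_left _ hu) (mem_filter.1 hi).1) hgrowT⟩
  · refine ⟨ρ, hM.grow hP sdiff_subset
      (fun i hi => mem_sdiff.2 ⟨(hP i).1, (mem_filter.1 hi).2⟩)
      (fun u hu hi => hF u (mem_union_right _ hu) (mem_filter.1 hi).1) ?_⟩
    rw [Finset.sdiff_sdiff_eq_self hTU]
    omega

theorem exists_isRainbowTree_of_contract {U : Finset V} (hP : ∀ i, IsParentTree U (rt i) (P i))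
    {v ρ : V} (hv : v ∈ U) {z : Fin k → V} {κ : V → Fin k}
    (hκ : IsRainbowTree (fun i => redirect v (z i) ∘ P i) (fun i => redirect v (z i) (rt i))
      (U.erase v) ρ κ) (hk : 2 * #U - 3 ≤ k) :
    ∃ w κ', IsRainbowTree P rt U w κ' := by
  obtain ⟨T, hTU, hT, hM⟩ := hκ.isParentTree.exists_split (q := fun u => P (κ u) u) hv
    fun u _ => eq_redirect_or_eq v (z (κ u)) (P (κ u) u)
  have hρ : ρ ∈ U.erase v := hκ.isParentTree.1
  have hTsub : T.erase v ⊆ (U.erase v).erase ρ := by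
    intro u hu
    obtain ⟨huv, huT⟩ := mem_erase.1 hu
    exact mem_erase.2
      ⟨fun h => (mem_sdiff.1 hM.1).2 (h ▸ huT), mem_erase.2 ⟨huv, hTU huT⟩⟩
  have hMsub : (U \ T).erase ρ ⊆ (U.erase v).erase ρ := by
    intro u hu
    obtain ⟨huρ, huU, huT⟩ : u ≠ ρ ∧ u ∈ U ∧ u ∉ T := by simpa using hu
    exact mem_erase.2 ⟨huρ, mem_erase.2 ⟨fun h => huT (h ▸ hT.1), huU⟩⟩
  refine exists_isRainbowTree_of_two_trees hP hTU (hκ.of_contract hT hTsub)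
    (hκ.of_contract hM hMsub) (F := (((U.erase v).erase ρ).image κ)ᶜ)
    (fun u hu hF => mem_compl.1 hF (mem_image_of_mem κ (union_subset hTsub hMsub hu))) ?_
  have hused := card_image_le (s := (U.erase v).erase ρ) (f := κ)
  rw [card_erase_of_mem hρ, card_erase_of_mem hv] at hused
  rw [card_compl, Fintype.card_fin]
  omega

theorem exists_isRainbowTree (U : Finset V) (hU : U.Nonempty) (P : Fin k → V → V)
    (rt : Fin k → V) (hP : ∀ i, IsParentTree U (rt i) (P i)) (hk₀ : 0 < k)
    (hk : 2 * #U - 3 ≤ k) : ∃ w κ, IsRainbowTree P rt U w κ := by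
  induction U using Finset.strongInduction generalizing P rt with
  | H U ih =>
  obtain ⟨v, hv⟩ := hU
  -- `κ` is a total function into `Fin k`, so even the one-vertex tree needs `0 < k`.
  obtain hU' | ⟨u₁, hu₁⟩ := (U.erase v).eq_empty_or_nonempty
  · refine ⟨v, fun _ => ⟨0, hk₀⟩, ⟨hv, fun u hu => ?_⟩, by simp [hU'], by simp [hU']⟩
    obtain rfl : u = v := by
      by_contra huv
      exact notMem_empty u (hU' ▸ mem_erase.2 ⟨huv, hu⟩)
    exact .refl
  set z : Fin k → V := fun i => if rt i = v then u₁ else P i v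
  have hz : ∀ i, z i ∈ U.erase v ∧ (rt i ≠ v → P i v = z i) := by
    intro i
    by_cases hi : rt i = v
    · simpa [z, hi] using hu₁
    · simpa [z, hi] using
        ⟨(hP i).parent_ne hv (Ne.symm hi), (hP i).parent_mem hv (Ne.symm hi)⟩
  obtain ⟨ρ, κ, hκ⟩ := ih (U.erase v) (erase_ssubset hv) ⟨u₁, hu₁⟩
    (fun i => redirect v (z i) ∘ P i) (fun i => redirect v (z i) (rt i))
    (fun i => (hP i).contract (hz i).1 (hz i).2) (by rw [card_erase_of_mem hv]; omega)
  exact exists_isRainbowTree_of_contract hP hv hκ hk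

end RainbowArbor

theorem stmt11 [Fintype V] [DecidableEq V] (hn : 2 ≤ Fintype.card V)
    (k : ℕ) (hk : 2 * Fintype.card V - 3 ≤ k)
    (A : Fin k → Finset (V × V)) (r : Fin k → V)
    (hA : ∀ i, IsSpanningArbor (A i) (r i)) :
    ∃ (B : Finset (V × V)) (r' : V), IsSpanningArbor B r' ∧ IsRainbowOf A B := by
  have hV : (univ : Finset V).Nonempty :=
    univ_nonempty_iff.2 (Fintype.card_pos_iff.1 (by omega))
  choose P hP hPA using fun i => (hA i).exists_isParentTree
  obtain ⟨w, κ, hκ⟩ :=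
    RainbowArbor.exists_isRainbowTree univ hV P r hP (by omega) (by rwa [card_univ])
  exact ⟨_, w, hκ.isParentTree.isArborOn_image, hκ.isRainbowOf hPA⟩
end

section
/- Let G on vertex set V (|V| = n ≥ 3) be the disjoint union of k spanning arborescences A_1,...,A_k with k ≥ 2n−4. Then G contains a rainbow spanning arborescence, i.e., a spanning arborescence using at most one arc from each A_i. -/
open Finset

variable {V : Type*}

/-!
Grow a rainbow arborescence greedily from one root, adding an arc of an unused colour that leaves
the covered set `T`. Each step spends one colour and covers one vertex, so `#D + #T` (unused colours
plus covered vertices) stays constant. If the process stalls at `T ⊊ U`, no unused colour has an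
arc leaving `T`; since an arborescence rooted in `T` always has such an arc, their roots lie in
`S = U \ T` and they restrict to arborescences on `S`. With `2n - 4` colours they are numerous
enough to find, by induction, a rainbow arborescence on `S`; it spends fewer than `#S` colours, and
the remaining ones, all rooted in `S`, cover `U \ S` greedily without stalling. When `#S = 1` the
induction is replaced by a single arc into the uncovered vertex.
-/

namespace IsArborOn

variable [DecidableEq V] {U : Finset V} {A : Finset (V × V)} {r : V}

lemma exists_arc_leaving (h : IsArborOn U A r) {T : Finset V} (hr : r ∈ T) (hUT : ¬ U ⊆ T) :
    ∃ e ∈ A, e.1 ∈ T ∧ e.2 ∈ U ∧ e.2 ∉ T := by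
  obtain ⟨v, hvU, hvT⟩ := not_subset.1 hUT
  have hv := h.2.2.2.2 v hvU
  induction hv with
  | refl => exact absurd hr hvT
  | @tail b c _ hbc ih =>
    by_cases hb : b ∈ T
    · exact ⟨(b, c), hbc, hb, hvU, hvT⟩
    · exact ih (h.2.1 _ hbc).1 hb

lemma restrict (h : IsArborOn U A r) {S : Finset V} (hSU : S ⊆ U) (hrS : r ∈ S)
    (hS : ∀ e ∈ A, e.2 ∈ S → e.1 ∈ S) : IsArborOn S (A.filter (·.2 ∈ S)) r := by
  obtain ⟨-, -, hroot, hindeg, hreach⟩ := h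
  refine ⟨hrS, fun e he => ?_, fun e he => hroot e (mem_filter.1 he).1, fun v hv hvr => ?_,
    fun v hv => ?_⟩
  · rw [mem_filter] at he
    exact ⟨hS e he.1 he.2, he.2⟩
  · rw [filter_filter, ← hindeg v (hSU hv) hvr]
    exact congrArg card (filter_congr fun e _ => and_iff_right_of_imp fun h => h ▸ hv)
  · have hv' := hreach v (hSU hv)
    induction hv' with
    | refl => exact .refl
    | @tail b c _ hbc ih =>
      exact (ih (hS _ hbc hv)).tail (mem_filter.2 ⟨hbc, hv⟩)

lemma insert_arc_s12 (h : IsArborOn U A r) {e : V × V} (h1 : e.1 ∈ U) (h2 : e.2 ∉ U) :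
    IsArborOn (insert e.2 U) (insert e A) r := by
  obtain ⟨hr, hends, hroot, hindeg, hreach⟩ := h
  have hA2 : ∀ a ∈ A, a.2 ≠ e.2 := fun a ha hae => h2 (hae ▸ (hends a ha).2)
  refine ⟨mem_insert_of_mem hr, ?_, ?_, ?_, ?_⟩
  · intro a ha
    rcases mem_insert.1 ha with rfl | ha
    · exact ⟨mem_insert_of_mem h1, mem_insert_self _ _⟩
    · exact ⟨mem_insert_of_mem (hends a ha).1, mem_insert_of_mem (hends a ha).2⟩
  · intro a ha
    rcases mem_insert.1 ha with rfl | ha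
    · exact fun her => h2 (her ▸ hr)
    · exact hroot a ha
  · intro v hv hvr
    rw [filter_insert]
    rcases mem_insert.1 hv with rfl | hv
    · rw [if_pos rfl, filter_false_of_mem fun a ha => hA2 a ha]
      rfl
    · rw [if_neg fun hev => h2 (by rwa [hev]), hindeg v hv hvr]
  · have hmono (v) (hv : v ∈ U) : Relation.ReflTransGen (fun a b => (a, b) ∈ insert e A) r v :=
      Relation.ReflTransGen.mono (fun a b hab => mem_insert_of_mem hab) _ _ (hreach v hv)
    intro v hv
    rcases mem_insert.1 hv with rfl | hv
    · exact (hmono _ h1).tail (mem_insert_self e A)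
    · exact hmono v hv

lemma card_lt (h : IsArborOn U A r) : A.card < U.card := by
  obtain ⟨hr, hends, hroot, hindeg, -⟩ := h
  have hinj : Set.InjOn Prod.snd (A : Set (V × V)) := by
    intro a ha b hb hab
    obtain ⟨x, hx⟩ := card_eq_one.1 (hindeg a.2 (hends a ha).2 (hroot a ha))
    have hax : a ∈ A.filter (·.2 = a.2) := mem_filter.2 ⟨ha, rfl⟩
    have hbx : b ∈ A.filter (·.2 = a.2) := mem_filter.2 ⟨hb, hab.symm⟩
    rw [hx, mem_singleton] at hax hbx
    rw [hax, hbx]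
  have hle := card_le_card_of_injOn Prod.snd
    (fun a ha => mem_erase.2 ⟨hroot a ha, (hends a ha).2⟩) hinj
  rw [card_erase_of_mem hr] at hle
  have := card_pos.2 ⟨r, hr⟩
  omega

end IsArborOn

section Rainbow

variable [DecidableEq V] {ι : Type*}

def HasRainbowArborAvoiding (A : ι → Finset (V × V)) (U : Finset V) (D : Finset ι) : Prop :=
  ∃ B ρ, IsArborOn U B ρ ∧
    ∃ c : V × V → ι, Set.InjOn c B ∧ ∀ e ∈ B, e ∈ A (c e) ∧ c e ∉ D

variable {A : ι → Finset (V × V)} {T U : Finset V}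

lemma hasRainbowArborAvoiding_singleton [Nonempty ι] (v : V) (D : Finset ι) :
    HasRainbowArborAvoiding A {v} D := by
  refine ⟨∅, v, ⟨mem_singleton_self v, by simp, by simp, fun w hw hwv => ?_,
    fun w hw => ?_⟩, fun _ => Classical.arbitrary ι, by simp, by simp⟩
  · exact absurd (mem_singleton.1 hw) hwv
  · rw [mem_singleton.1 hw]

lemma HasRainbowArborAvoiding.mono {D D' : Finset ι} (h : HasRainbowArborAvoiding A U D)
    (hD : D' ⊆ D) : HasRainbowArborAvoiding A U D' := by
  obtain ⟨B, ρ, hB, c, hinj, hc⟩ := h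
  exact ⟨B, ρ, hB, c, hinj, fun e he => ⟨(hc e he).1, fun h => (hc e he).2 (hD h)⟩⟩

variable [DecidableEq ι] {D : Finset ι}

lemma HasRainbowArborAvoiding.exists_of_subtype {A' : D → Finset (V × V)}
    (hA' : ∀ i, A' i ⊆ A i) (h : HasRainbowArborAvoiding A' U ∅) :
    ∃ D' ⊆ D, D.card < D'.card + U.card ∧ HasRainbowArborAvoiding A U D' := by
  obtain ⟨B, ρ, hB, c, hinj, hc⟩ := h
  set E := B.image fun e => (c e : ι)
  refine ⟨D \ E, sdiff_subset, ?_, B, ρ, hB, fun e => c e, Subtype.val_injective.comp_injOn hinj,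
    fun e he => ⟨hA' _ (hc e he).1, fun h => (mem_sdiff.1 h).2 (mem_image_of_mem _ he)⟩⟩
  have := hB.card_lt
  have : E.card ≤ B.card := card_image_le
  have := le_card_sdiff E D
  omega

lemma HasRainbowArborAvoiding.insert_arc_s12 (h : HasRainbowArborAvoiding A T D) {i : ι} (hi : i ∈ D)
    {e : V × V} (he : e ∈ A i) (h1 : e.1 ∈ T) (h2 : e.2 ∉ T) :
    HasRainbowArborAvoiding A (insert e.2 T) (D.erase i) := by
  obtain ⟨B, ρ, hB, c, hinj, hc⟩ := h
  have heB : e ∉ B := fun heB => h2 (hB.2.1 e heB).2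
  have hcB : Set.EqOn c (Function.update c e i) B := fun a ha =>
    (Function.update_of_ne (ne_of_mem_of_not_mem ha heB) _ _).symm
  refine ⟨insert e B, ρ, hB.insert_arc_s12 h1 h2, Function.update c e i, ?_, ?_⟩
  · rw [coe_insert, Set.injOn_insert (mod_cast heB)]
    refine ⟨hinj.congr hcB, ?_⟩
    rintro ⟨a, ha, hae⟩
    rw [Function.update_self, ← hcB ha] at hae
    exact (hc a ha).2 (hae ▸ hi)
  · intro a ha
    rcases mem_insert.1 ha with rfl | ha
    · rw [Function.update_self]
      exact ⟨he, notMem_erase _ _⟩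
    · rw [← hcB ha]
      exact ⟨(hc a ha).1, fun h => (hc a ha).2 (mem_of_mem_erase h)⟩

lemma HasRainbowArborAvoiding.greedy (hTU : T ⊆ U) (h : HasRainbowArborAvoiding A T D) :
    HasRainbowArborAvoiding A U ∅ ∨
      ∃ T' D', T ⊆ T' ∧ T' ⊂ U ∧ D' ⊆ D ∧ D'.card + T'.card = D.card + T.card ∧
        ∀ i ∈ D', ∀ e ∈ A i, e.1 ∈ T' → e.2 ∈ U → e.2 ∈ T' := by
  induction hn : U.card - T.card using Nat.strong_induction_on generalizing T D with
  | _ n ih =>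
  by_cases hUT : U ⊆ T
  · exact .inl ((subset_antisymm hTU hUT ▸ h).mono (empty_subset D))
  by_cases hstuck : ∀ i ∈ D, ∀ e ∈ A i, e.1 ∈ T → e.2 ∈ U → e.2 ∈ T
  · exact .inr ⟨T, D, subset_rfl, ⟨hTU, hUT⟩, subset_rfl, rfl, hstuck⟩
  push Not at hstuck
  obtain ⟨i, hi, e, he, h1, h2U, h2T⟩ := hstuck
  have hcard := card_le_card (insert_subset h2U hTU)
  have hins := card_insert_of_notMem h2T
  have hera := card_erase_of_mem hi
  have hpos := card_pos.2 ⟨i, hi⟩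
  obtain h' | ⟨T', D', hTT', hT'U, hD'D, hcard', hclosed⟩ :=
    ih _ (by omega) (insert_subset h2U hTU) (h.insert_arc_s12 hi he h1 h2T) rfl
  · exact .inl h'
  · exact .inr ⟨T', D', (subset_insert _ _).trans hTT', hT'U, hD'D.trans (erase_subset _ _),
      by omega, hclosed⟩

lemma HasRainbowArborAvoiding.extend_of_card_le {r : ι → V} (h : HasRainbowArborAvoiding A T D)
    (hTU : T ⊆ U) (hA : ∀ i ∈ D, IsArborOn U (A i) (r i)) (hr : ∀ i ∈ D, r i ∈ T)
    (hcard : U.card ≤ D.card + T.card) : HasRainbowArborAvoiding A U ∅ := by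
  obtain h | ⟨T', D', hTT', hT'U, hD'D, hcard', hclosed⟩ := h.greedy hTU
  · exact h
  obtain ⟨i, hi⟩ : D'.Nonempty := by
    rw [← card_pos]
    have := card_lt_card hT'U
    omega
  obtain ⟨e, he, h1, h2, h3⟩ :=
    (hA i (hD'D hi)).exists_arc_leaving (hTT' (hr i (hD'D hi))) hT'U.2
  exact (h3 (hclosed i hi e he h1 h2)).elim

lemma hasRainbowArborAvoiding_of_roots_eq [Fintype ι] [Nonempty ι] {r : ι → V}
    (hA : ∀ i, IsArborOn U (A i) (r i)) (hU : U.card ≤ Fintype.card ι + 1) {z : V}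
    (hz : z ∈ U) (hD : ∀ i ∈ D, r i = z) (hcard : U.card ≤ D.card + 2) :
    HasRainbowArborAvoiding A U ∅ := by
  by_cases hall : ∀ i, r i = z
  · exact (hasRainbowArborAvoiding_singleton z univ).extend_of_card_le
      (singleton_subset_iff.2 hz) (fun i _ => hA i) (by simp [hall]) (by simpa using hU)
  push Not at hall
  obtain ⟨c, hc⟩ := hall
  have hcD : c ∉ D := fun h => hc (hD c h)
  obtain ⟨e, he, h1, h2, h3⟩ := (hA c).exists_arc_leaving (T := U.erase z)
    (mem_erase.2 ⟨hc, (hA c).1⟩) (fun h => by simpa using h hz)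
  have hez : e.2 = z := by simpa [h2] using h3
  have h1z : e.1 ≠ z := (mem_erase.1 h1).1
  have hpair := (hasRainbowArborAvoiding_singleton e.1 (insert c D)).insert_arc_s12
    (mem_insert_self c D) he (mem_singleton_self _) (by simpa [hez] using h1z.symm)
  rw [erase_insert hcD] at hpair
  refine hpair.extend_of_card_le (insert_subset h2 (singleton_subset_iff.2 (mem_erase.1 h1).2))
    (fun i _ => hA i) (fun i hi => by simp [hD i hi, hez]) ?_
  rw [card_insert_of_notMem (by simpa [hez] using h1z.symm), card_singleton]
  exact hcard

theorem hasRainbowArborAvoiding_of_card_le [Fintype ι] [Nonempty ι] {r : ι → V}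
    (hA : ∀ i, IsArborOn U (A i) (r i)) (h1 : U.card ≤ Fintype.card ι + 1)
    (h2 : 2 * U.card ≤ Fintype.card ι + 4) : HasRainbowArborAvoiding A U ∅ := by
  induction hn : U.card using Nat.strong_induction_on generalizing U ι with
  | _ n ih =>
  obtain ⟨i₀⟩ := ‹Nonempty ι›
  obtain h | ⟨T, D, hi₀T, hTU, -, hcard, hclosed⟩ :=
    (hasRainbowArborAvoiding_singleton (r i₀) (univ : Finset ι)).greedy
      (singleton_subset_iff.2 (hA i₀).1)
  · exact h
  have hTpos := card_pos.2 ⟨r i₀, hi₀T (mem_singleton_self _)⟩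
  rw [card_univ, card_singleton] at hcard
  have hroots : ∀ i ∈ D, r i ∈ U \ T := fun i hi => mem_sdiff.2 ⟨(hA i).1, fun hrT => by
    obtain ⟨e, he, h1, h2, h3⟩ := (hA i).exists_arc_leaving hrT hTU.2
    exact h3 (hclosed i hi e he h1 h2)⟩
  have hS := card_sdiff_add_card_eq_card hTU.1
  have hSpos := card_pos.2 (sdiff_nonempty.2 hTU.2)
  obtain hS1 | hS2 : (U \ T).card = 1 ∨ 2 ≤ (U \ T).card := by omega
  · obtain ⟨z, hz⟩ := card_eq_one.1 hS1
    exact hasRainbowArborAvoiding_of_roots_eq hA h1 (mem_sdiff.1 (hz ▸ mem_singleton_self z)).1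
      (fun i hi => by simpa [hz] using hroots i hi) (by omega)
  have hSclosed : ∀ i ∈ D, ∀ e ∈ A i, e.2 ∈ U \ T → e.1 ∈ U \ T := fun i hi e he h2 =>
    mem_sdiff.2 ⟨((hA i).2.1 e he).1,
      fun h1 => (mem_sdiff.1 h2).2 (hclosed i hi e he h1 (mem_sdiff.1 h2).1)⟩
  have : Nonempty D := (card_pos.1 (by omega : 0 < D.card)).to_subtype
  have hsub := ih (U \ T).card (by omega) (ι := D)
    (A := fun i : D => (A i).filter (·.2 ∈ U \ T)) (r := fun i => r i)
    (fun i => (hA i).restrict sdiff_subset (hroots i i.2) (hSclosed i i.2))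
    (by rw [Fintype.card_coe]; omega) (by rw [Fintype.card_coe]; omega) rfl
  obtain ⟨D', hD'D, hD', h⟩ := hsub.exists_of_subtype fun i => filter_subset _ _
  exact h.extend_of_card_le sdiff_subset (fun i _ => hA i) (fun i hi => hroots i (hD'D hi))
    (by omega)

end Rainbow

theorem stmt12 [Fintype V] [DecidableEq V] (hn : 3 ≤ Fintype.card V)
    (k : ℕ) (hk : 2 * Fintype.card V - 4 ≤ k)
    (A : Fin k → Finset (V × V)) (r : Fin k → V)
    (hA : ∀ i, IsSpanningArbor (A i) (r i)) :
    ∃ (B : Finset (V × V)) (r' : V), IsSpanningArbor B r' ∧ IsRainbowOf A B := by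
  have : Nonempty (Fin k) := ⟨⟨0, by omega⟩⟩
  obtain ⟨B, ρ, hB, c, hinj, hc⟩ :=
    hasRainbowArborAvoiding_of_card_le hA (by rw [card_univ, Fintype.card_fin]; omega)
      (by rw [card_univ, Fintype.card_fin]; omega)
  exact ⟨B, ρ, hB, c, hinj, fun e he => (hc e he).1⟩
end

section
/- Let G on vertex set V (|V| = n ≥ 2) be the disjoint union of n−1 spanning arborescences A_1,...,A_{n−1}, and let k ≤ ⌊n/2⌋. Then G contains a rainbow arborescence of size k, i.e., an arborescence with k arcs using at most one arc from each A_i. -/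
open Finset

variable {V : Type*}

section Abstract
variable [DecidableEq V]

/-- Abstract rooted tree (arborescence) data on a finite vertex set `U`,
acyclicity certified by a rank function. -/
def IsTreeOn (U : Finset V) (T : Finset (V × V)) (ρ : V) : Prop :=
  ρ ∈ U ∧ (∀ e ∈ T, e.1 ∈ U ∧ e.2 ∈ U) ∧ (∀ e ∈ T, e.2 ≠ ρ) ∧
  (∀ v ∈ U, v ≠ ρ → (T.filter (fun e => e.2 = v)).card = 1) ∧
  (∃ rk : V → ℕ, ∀ e ∈ T, rk e.1 < rk e.2)

variable {ι : Type*} [DecidableEq ι]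

/-- `c` is a valid rainbow coloring of `T` by colors in `I` w.r.t. classes `F`. -/
def IsColoring (I : Finset ι) (F : ι → Finset (V × V)) (T : Finset (V × V)) (c : V × V → ι) :
    Prop :=
  Set.InjOn c ↑T ∧ ∀ e ∈ T, c e ∈ I ∧ e ∈ F (c e)

/-- The color classes `F i`, `i ∈ I`, are in-forests on `U`. -/
def IsForests (U : Finset V) (I : Finset ι) (F : ι → Finset (V × V)) : Prop :=
  ∀ i ∈ I, (∀ e ∈ F i, e.1 ∈ U ∧ e.2 ∈ U) ∧
    (∀ v : V, ((F i).filter (fun e => e.2 = v)).card ≤ 1) ∧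
    (∃ rk : V → ℕ, ∀ e ∈ F i, rk e.1 < rk e.2)

/-- number of arcs of a tree -/
lemma tree_card {U : Finset V} {T : Finset (V × V)} {ρ : V} (h : IsTreeOn U T ρ) :
    T.card + 1 = U.card := by
  obtain ⟨hρ, hUV, hroot, hdeg, -⟩ := h
  have h1 : T.card = ∑ v ∈ U.erase ρ, (T.filter (fun e => e.2 = v)).card := by
    apply Finset.card_eq_sum_card_fiberwise
    intro e he
    exact Finset.mem_erase.2 ⟨hroot e he, (hUV e he).2⟩
  have h2 : ∑ v ∈ U.erase ρ, (T.filter (fun e => e.2 = v)).card = (U.erase ρ).card := by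
    rw [Finset.card_eq_sum_ones (U.erase ρ)]
    apply Finset.sum_congr rfl
    intro v hv
    exact hdeg v (Finset.mem_of_mem_erase hv) (Finset.ne_of_mem_erase hv)
  rw [h1, h2, Finset.card_erase_of_mem hρ]
  exact Nat.succ_pred_eq_of_pos (Finset.card_pos.2 ⟨ρ, hρ⟩)

/-- the unique in-arc of a non-root vertex -/
lemma in_arc {U : Finset V} {T : Finset (V × V)} {ρ : V} (h : IsTreeOn U T ρ)
    {v : V} (hv : v ∈ U) (hvρ : v ≠ ρ) :
    ∃ a, (a, v) ∈ T ∧ ∀ e ∈ T, e.2 = v → e = (a, v) := by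
  obtain ⟨e, he⟩ := Finset.card_eq_one.1 (h.2.2.2.1 v hv hvρ)
  have heT : e ∈ T.filter (fun e => e.2 = v) := he ▸ Finset.mem_singleton_self e
  have h2 := (Finset.mem_filter.1 heT).2
  refine ⟨e.1, ?_, ?_⟩
  · have := (Finset.mem_filter.1 heT).1
    simpa [← h2] using this
  · intro f hf hf2
    have : f ∈ T.filter (fun e => e.2 = v) := Finset.mem_filter.2 ⟨hf, hf2⟩
    rw [he, Finset.mem_singleton] at this
    subst this
    simp [← hf2]

/-- reachability from rank + in-degree -/
lemma reach_of_tree {U : Finset V} {T : Finset (V × V)} {ρ : V} (h : IsTreeOn U T ρ) :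
    ∀ v ∈ U, Relation.ReflTransGen (fun a b => (a, b) ∈ T) ρ v := by
  obtain ⟨rk, hrk⟩ := h.2.2.2.2
  have key : ∀ n v, v ∈ U → rk v < n → Relation.ReflTransGen (fun a b => (a, b) ∈ T) ρ v := by
    intro n
    induction n with
    | zero => intro v _ hv; omega
    | succ n ih =>
      intro v hv hrkv
      by_cases hvρ : v = ρ
      · subst hvρ; exact Relation.ReflTransGen.refl
      · obtain ⟨a, haT, -⟩ := in_arc h hv hvρ
        have ha : a ∈ U := (h.2.1 _ haT).1
        have : rk a < rk v := hrk _ haT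
        exact Relation.ReflTransGen.tail (ih a ha (by omega)) haT
  exact fun v hv => key (rk v + 1) v hv (Nat.lt_succ_self _)

end Abstract
/-- unique in-arc, from the degree condition alone -/
lemma in_arc_deg {T : Finset (V × V)} {v : V} [DecidableEq V]
    (hdeg : (T.filter (fun e => e.2 = v)).card = 1) :
    ∃ a, (a, v) ∈ T ∧ ∀ e ∈ T, e.2 = v → e = (a, v) := by
  obtain ⟨e, he⟩ := Finset.card_eq_one.1 hdeg
  have heT : e ∈ T.filter (fun e => e.2 = v) := he ▸ Finset.mem_singleton_self e
  have h2 := (Finset.mem_filter.1 heT).2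
  refine ⟨e.1, ?_, ?_⟩
  · have := (Finset.mem_filter.1 heT).1
    simpa [← h2] using this
  · intro f hf hf2
    have : f ∈ T.filter (fun e => e.2 = v) := Finset.mem_filter.2 ⟨hf, hf2⟩
    rw [he, Finset.mem_singleton] at this
    subst this
    simp [← hf2]

section Ambient
variable [DecidableEq V]

/-- no cycles through reachable vertices in an arborescence -/
lemma arbor_no_cycle {U : Finset V} {A : Finset (V × V)} {r : V}
    (h : IsArborOn U A r) :
    ∀ v, Relation.ReflTransGen (fun a b => (a, b) ∈ A) r v →
      ¬ Relation.TransGen (fun a b => (a, b) ∈ A) v v := by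
  obtain ⟨hr, hUV, hroot, hdeg, hreach⟩ := h
  intro v hv
  induction hv with
  | refl =>
    intro hcyc
    obtain ⟨x, -, hx2⟩ := Relation.TransGen.tail'_iff.1 hcyc
    exact hroot (x, r) hx2 rfl
  | @tail x v hpath harc ih =>
    intro hcyc
    obtain ⟨y, hvy, hyv⟩ := Relation.TransGen.tail'_iff.1 hcyc
    -- (y, v) and (x, v) are both in-arcs of v
    have hvr : v ≠ r := fun hh => hroot (x, v) harc hh
    have hvU : v ∈ U := (hUV _ harc).2
    obtain ⟨a, haT, huniq⟩ := in_arc_deg (hdeg v hvU hvr)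
    have hy : (y, v) = (a, v) := huniq _ hyv rfl
    have hx : (x, v) = (a, v) := huniq _ harc rfl
    have hxy : y = x := (Prod.mk.injEq ..).mp (hy.trans hx.symm) |>.1
    subst hxy
    exact ih (Relation.TransGen.head' harc hvy)

/-- rank function for an arborescence on U (arcs strictly increase rank) -/
lemma arbor_rank {U : Finset V} {A : Finset (V × V)} {r : V} [Fintype V]
    (h : IsArborOn U A r) :
    ∃ rk : V → ℕ, ∀ e ∈ A, rk e.1 < rk e.2 := by
  classical
  set R := fun a b => (a, b) ∈ A with hR
  refine ⟨fun v => (Finset.univ.filter (fun w => w ≠ v ∧ Relation.ReflTransGen R w v)).card, ?_⟩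
  rintro ⟨a, b⟩ he
  simp only
  apply Finset.card_lt_card
  have hreach : ∀ v ∈ U, Relation.ReflTransGen R r v := h.2.2.2.2
  have hnc := arbor_no_cycle h
  have hab : a ≠ b := by
    rintro rfl
    exact hnc a (hreach a (h.2.1 _ he).1) (Relation.TransGen.single he)
  constructor
  · intro w hw
    simp only [Finset.mem_filter, Finset.mem_univ, true_and] at hw ⊢
    obtain ⟨hwa, hpath⟩ := hw
    exact ⟨fun hwb => hnc b (hreach b (h.2.1 _ he).2)
      (Relation.TransGen.tail' (hwb ▸ hpath) he), hpath.tail he⟩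
  · intro hsub
    have : a ∈ Finset.univ.filter (fun w => w ≠ b ∧ Relation.ReflTransGen R w b) := by
      simp only [Finset.mem_filter, Finset.mem_univ, true_and]
      exact ⟨hab, Relation.ReflTransGen.single he⟩
    have ha := hsub this
    simp only [Finset.mem_filter, Finset.mem_univ, true_and] at ha
    exact ha.1 rfl

/-- a reachability chain from inside U to outside U crosses U's boundary -/
lemma crossing_arc {U : Finset V} {A : Finset (V × V)} {a b : V}
    (hreach : Relation.ReflTransGen (fun a b => (a, b) ∈ A) a b)
    (ha : a ∈ U) (hb : b ∉ U) :
    ∃ e ∈ A, e.1 ∈ U ∧ e.2 ∉ U := by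
  induction hreach with
  | refl => exact absurd ha hb
  | @tail x v hpath harc ih =>
    by_cases hx : x ∈ U
    · exact ⟨(x, v), harc, hx, hb⟩
    · exact ih hx

end Ambient
section Glue
variable [DecidableEq V]

lemma rk_mono {T : Finset (V × V)} {rk : V → ℕ} (h : ∀ e ∈ T, rk e.1 < rk e.2) {u v : V}
    (hp : Relation.ReflTransGen (fun a b => (a, b) ∈ T) u v) : rk u ≤ rk v := by
  induction hp with
  | refl => exact le_rfl
  | tail hpath harc ih => exact le_trans ih (le_of_lt (h _ harc))

/-- glue two disjoint trees with a connecting arc from the first into the second root -/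
lemma glue_tree {U1 U2 : Finset V} {T1 T2 : Finset (V × V)} {ρ1 ρ2 a : V}
    (h1 : IsTreeOn U1 T1 ρ1) (h2 : IsTreeOn U2 T2 ρ2)
    (hdisj : ∀ v ∈ U1, v ∉ U2) (ha : a ∈ U1) :
    IsTreeOn (U1 ∪ U2) (insert (a, ρ2) (T1 ∪ T2)) ρ1 := by
  obtain ⟨hρ1, hU1, hr1, hd1, rk1, hrk1⟩ := h1
  obtain ⟨hρ2, hU2, hr2, hd2, rk2, hrk2⟩ := h2
  have hρ2n1 : ρ2 ∉ U1 := fun hh => hdisj _ hh hρ2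
  refine ⟨Finset.mem_union_left _ hρ1, ?_, ?_, ?_, ?_⟩
  · intro e he
    rcases Finset.mem_insert.1 he with rfl | he
    · exact ⟨Finset.mem_union_left _ ha, Finset.mem_union_right _ hρ2⟩
    rcases Finset.mem_union.1 he with he | he
    · exact ⟨Finset.mem_union_left _ (hU1 e he).1, Finset.mem_union_left _ (hU1 e he).2⟩
    · exact ⟨Finset.mem_union_right _ (hU2 e he).1, Finset.mem_union_right _ (hU2 e he).2⟩
  · intro e he
    rcases Finset.mem_insert.1 he with rfl | he
    · exact fun hh => hρ2n1 ((show ρ2 = ρ1 from hh) ▸ hρ1)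
    rcases Finset.mem_union.1 he with he | he
    · exact hr1 e he
    · exact fun hh => hdisj _ (hh ▸ hρ1) (hU2 e he).2
  · intro v hv hvρ1
    rcases Finset.mem_union.1 hv with hv1 | hv2
    · -- v ∈ U1, filter equals T1's
      have : (insert (a, ρ2) (T1 ∪ T2)).filter (fun e => e.2 = v) =
          T1.filter (fun e => e.2 = v) := by
        apply Finset.ext
        intro e
        simp only [Finset.mem_filter, Finset.mem_insert, Finset.mem_union]
        constructor
        · rintro ⟨(rfl | he | he), hev⟩
          · exact absurd ((show ρ2 = v from hev) ▸ hv1) hρ2n1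
          · exact ⟨he, hev⟩
          · exact absurd ((show e.2 = v from hev) ▸ (hU2 e he).2)
              (fun hh => hdisj _ hv1 hh)
        · rintro ⟨he, hev⟩; exact ⟨Or.inr (Or.inl he), hev⟩
      rw [this]; exact hd1 v hv1 hvρ1
    · by_cases hvρ2 : v = ρ2
      · rw [hvρ2]
        have : (insert (a, ρ2) (T1 ∪ T2)).filter (fun e => e.2 = ρ2) = {(a, ρ2)} := by
          apply Finset.ext
          intro e
          simp only [Finset.mem_filter, Finset.mem_insert, Finset.mem_union,
            Finset.mem_singleton]
          constructor
          · rintro ⟨(rfl | he | he), hev⟩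
            · rfl
            · exact absurd (hev ▸ (hU1 e he).2) hρ2n1
            · exact absurd hev (hr2 e he)
          · rintro rfl; exact ⟨Or.inl rfl, rfl⟩
        rw [this, Finset.card_singleton]
      · have : (insert (a, ρ2) (T1 ∪ T2)).filter (fun e => e.2 = v) =
            T2.filter (fun e => e.2 = v) := by
          apply Finset.ext
          intro e
          simp only [Finset.mem_filter, Finset.mem_insert, Finset.mem_union]
          constructor
          · rintro ⟨(rfl | he | he), hev⟩
            · exact absurd hev.symm hvρ2
            · exact absurd (hev ▸ (hU1 e he).2) (fun hh => hdisj _ hh hv2)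
            · exact ⟨he, hev⟩
          · rintro ⟨he, hev⟩; exact ⟨Or.inr (Or.inr he), hev⟩
        rw [this]; exact hd2 v hv2 hvρ2
  · -- rank
    refine ⟨fun v => if v ∈ U1 then rk1 v else U1.sup rk1 + 1 + rk2 v, ?_⟩
    intro e he
    rcases Finset.mem_insert.1 he with rfl | he
    · have hle : rk1 a ≤ U1.sup rk1 := Finset.le_sup (f := rk1) ha
      simp only [if_pos ha, if_neg hρ2n1]
      omega
    rcases Finset.mem_union.1 he with he | he
    · simp only [if_pos (hU1 e he).1, if_pos (hU1 e he).2]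
      exact hrk1 e he
    · have h1' : e.1 ∉ U1 := fun hh => hdisj _ hh (hU2 e he).1
      have h2' : e.2 ∉ U1 := fun hh => hdisj _ hh (hU2 e he).2
      simp only [if_neg h1', if_neg h2']
      have := hrk2 e he
      omega

end Glue
section K3
variable [DecidableEq V] {ι : Type*} [DecidableEq ι]

theorem K3 :
    ∀ (n : ℕ) (U : Finset V) (I : Finset ι) (F : ι → Finset (V × V)),
      U.card ≤ n → U.Nonempty → IsForests U I F → 2 * U.card ≤ I.card + 1 →
      (∃ T c ρ, IsTreeOn U T ρ ∧ IsColoring I F T c) →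
      ∃ T c ρ i, IsTreeOn U T ρ ∧ IsColoring I F T c ∧ i ∈ I ∧
        (∀ e ∈ T, c e ≠ i) ∧ (∀ e ∈ F i, e.2 ≠ ρ) := by
  intro n
  induction n with
  | zero =>
    intro U I F hn hne _ _ _
    exact absurd (Finset.card_pos.2 hne) (by omega)
  | succ n IH =>
    intro U I F hn hne hforests hcount hex
    classical
    obtain ⟨T0, c0, ρ0, hT0, hc0⟩ := hex
    -- find an unused color j
    have hT0card : T0.card + 1 = U.card := tree_card hT0
    have hUpos : 1 ≤ U.card := Finset.card_pos.2 hne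
    have hjex : ∃ j ∈ I, j ∉ T0.image c0 := by
      by_contra hcon
      push_neg at hcon
      have hsub : I ⊆ T0.image c0 := fun j hj => hcon j hj
      have h1 : I.card ≤ (T0.image c0).card := Finset.card_le_card hsub
      have h2 : (T0.image c0).card ≤ T0.card := Finset.card_image_le
      omega
    obtain ⟨j, hjI, hjnotim⟩ := hjex
    obtain ⟨hFjU, hFjdeg, rkj, hrkj⟩ := hforests j hjI
    -- the inner induction on the rank of the root
    have inner : ∀ (M : ℕ) (T : Finset (V × V)) (c : V × V → ι) (ρ : V),
        IsTreeOn U T ρ → IsColoring I F T c → (∀ e ∈ T, c e ≠ j) → rkj ρ < M →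
        ∃ T' c' ρ' i, IsTreeOn U T' ρ' ∧ IsColoring I F T' c' ∧ i ∈ I ∧
          (∀ e ∈ T', c' e ≠ i) ∧ (∀ e ∈ F i, e.2 ≠ ρ') := by
      intro M
      induction M with
      | zero => intro T c ρ _ _ _ h; omega
      | succ M ih =>
        intro T c ρ hT hc hjun hrk
        by_cases hwin : ∀ e ∈ F j, e.2 ≠ ρ
        · exact ⟨T, c, ρ, j, hT, hc, hjI, hjun, hwin⟩
        push_neg at hwin
        obtain ⟨ex, hexF, hexρ⟩ := hwin
        set x1 := ex.1 with hx1def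
        have harc : (x1, ρ) ∈ F j := by rw [← hexρ]; exact hexF
        have hrkx : rkj x1 < rkj ρ := hrkj _ harc
        have hx1U : x1 ∈ U := (hFjU _ harc).1
        have hx1ρ : x1 ≠ ρ := by intro hh; rw [hh] at hrkx; omega
        obtain ⟨hρU, hTU, hTroot, hTdeg, rkT, hrkT⟩ := hT
        set S1 := U.filter (fun v => Relation.ReflTransGen (fun a b => (a, b) ∈ T) x1 v)
          with hS1def
        have hx1S : x1 ∈ S1 :=
          Finset.mem_filter.2 ⟨hx1U, Relation.ReflTransGen.refl⟩
        have hdc : ∀ v ∈ S1, ∀ w, (v, w) ∈ T → w ∈ S1 := by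
          intro v hv w hw
          exact Finset.mem_filter.2 ⟨(hTU _ hw).2, (Finset.mem_filter.1 hv).2.tail hw⟩
        have hρS : ρ ∉ S1 := by
          intro hh
          have hpath := (Finset.mem_filter.1 hh).2
          rcases Relation.ReflTransGen.cases_tail hpath with h | ⟨y, -, hy⟩
          · exact hx1ρ h.symm
          · exact hTroot (y, ρ) hy rfl
        have hSin : ∀ v ∈ S1, v ≠ x1 → ∀ a, (a, v) ∈ T → a ∈ S1 := by
          intro v hv hvx a hav
          obtain ⟨hvU, hpath⟩ := Finset.mem_filter.1 hv
          rcases Relation.ReflTransGen.cases_tail hpath with h | ⟨y, hy1, hy2⟩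
          · exact absurd h hvx
          · have hvρ : v ≠ ρ := fun hh => hρS (hh ▸ hv)
            obtain ⟨b, hbT, huq⟩ := in_arc_deg (hTdeg v hvU hvρ)
            have e1 : (y, v) = (b, v) := huq _ hy2 rfl
            have e2 : (a, v) = (b, v) := huq _ hav rfl
            have hay : a = y := by
              have h1 := ((Prod.mk.injEq ..).mp e1).1
              have h2 := ((Prod.mk.injEq ..).mp e2).1
              rw [h1, h2]
            subst hay
            exact Finset.mem_filter.2 ⟨(hTU _ hy2).1, hy1⟩
        obtain ⟨π, hπT, hπuq⟩ := in_arc_deg (hTdeg x1 hx1U hx1ρ)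
        have hπU : π ∈ U := (hTU _ hπT).1
        have hπS : π ∉ S1 := by
          intro hh
          have hpath := (Finset.mem_filter.1 hh).2
          have h1 := rk_mono hrkT hpath
          have h2 := hrkT _ hπT
          simp only at h2
          omega
        set U' := U \ S1 with hU'def
        have hρU' : ρ ∈ U' := Finset.mem_sdiff.2 ⟨hρU, hρS⟩
        have hπU' : π ∈ U' := Finset.mem_sdiff.2 ⟨hπU, hπS⟩
        have hS1U : S1 ⊆ U := Finset.filter_subset _ _
        have hU'card : U'.card + S1.card = U.card := Finset.card_sdiff_add_card_eq_card hS1U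
        set T' := T.filter (fun e => e.2 ∉ S1) with hT'def
        set Ts := T.filter (fun e => e.2 ∈ S1 ∧ e.2 ≠ x1) with hTsdef
        have hT'subT : T' ⊆ T := Finset.filter_subset _ _
        have hTssubT : Ts ⊆ T := Finset.filter_subset _ _
        have hT'U : ∀ e ∈ T', e.1 ∈ U' ∧ e.2 ∈ U' := by
          intro e he
          obtain ⟨heT, heS⟩ := Finset.mem_filter.1 he
          have h1 : e.1 ∉ S1 := by
            intro hh
            exact heS (hdc e.1 hh e.2 (by exact heT))
          exact ⟨Finset.mem_sdiff.2 ⟨(hTU _ heT).1, h1⟩, Finset.mem_sdiff.2 ⟨(hTU _ heT).2, heS⟩⟩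
        have htreeT' : IsTreeOn U' T' ρ := by
          refine ⟨hρU', hT'U, fun e he => hTroot e (hT'subT he), ?_, ⟨rkT, fun e he => hrkT e (hT'subT he)⟩⟩
          intro v hv hvρ
          have hvS : v ∉ S1 := (Finset.mem_sdiff.1 hv).2
          have : T'.filter (fun e => e.2 = v) = T.filter (fun e => e.2 = v) := by
            apply Finset.ext
            intro e
            simp only [hT'def, Finset.mem_filter, and_assoc]
            constructor
            · rintro ⟨h1, -, h3⟩; exact ⟨h1, h3⟩
            · rintro ⟨h1, h3⟩; exact ⟨h1, (h3 ▸ hvS), h3⟩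
          rw [this]
          exact hTdeg v (Finset.mem_sdiff.1 hv).1 hvρ
        have hTsU : ∀ e ∈ Ts, e.1 ∈ S1 ∧ e.2 ∈ S1 := by
          intro e he
          obtain ⟨heT, heS, hex1⟩ := Finset.mem_filter.1 he
          exact ⟨hSin e.2 heS hex1 e.1 (by exact heT), heS⟩
        have htreeTs : IsTreeOn S1 Ts x1 := by
          refine ⟨hx1S, hTsU, ?_, ?_, ⟨rkT, fun e he => hrkT e (hTssubT he)⟩⟩
          · intro e he
            exact (Finset.mem_filter.1 he).2.2
          · intro v hv hvx
            have hvρ : v ≠ ρ := fun hh => hρS (hh ▸ hv)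
            have : Ts.filter (fun e => e.2 = v) = T.filter (fun e => e.2 = v) := by
              apply Finset.ext
              intro e
              simp only [hTsdef, Finset.mem_filter, and_assoc]
              constructor
              · rintro ⟨h1, -, -, h4⟩; exact ⟨h1, h4⟩
              · rintro ⟨h1, h4⟩; exact ⟨h1, h4 ▸ hv, h4 ▸ hvx, h4⟩
            rw [this]
            exact hTdeg v (hS1U hv) hvρ
        have hTscard : Ts.card + 1 = S1.card := tree_card htreeTs
        have hS1pos : 1 ≤ S1.card := Finset.card_pos.2 ⟨x1, hx1S⟩
        set Cf : Finset ι := insert (c (π, x1)) (Ts.image c) with hCfdef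
        set I'' := (I.erase j) \ Cf with hI''def
        have hCfcard : Cf.card ≤ S1.card := by
          calc Cf.card ≤ (Ts.image c).card + 1 := Finset.card_insert_le _ _
            _ ≤ Ts.card + 1 := by
                have := Finset.card_image_le (s := Ts) (f := c)
                omega
            _ = S1.card := hTscard
        have hI''subI : I'' ⊆ I := fun i hi =>
          Finset.mem_of_mem_erase (Finset.mem_sdiff.1 hi).1
        -- frozen arc memberships
        have hπx1T : (π, x1) ∈ T := hπT
        have hπx1T' : (π, x1) ∉ T' := by
          intro hh
          exact (Finset.mem_filter.1 hh).2 hx1S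
        have hπx1Ts : (π, x1) ∉ Ts := by
          intro hh
          exact (Finset.mem_filter.1 hh).2.2 rfl
        set F'' := fun i => (F i).filter (fun e => e.1 ∈ U' ∧ e.2 ∈ U') with hF''def
        have hcol' : IsColoring I'' F'' T' c := by
          refine ⟨hc.1.mono (by exact_mod_cast Finset.coe_subset.2 hT'subT), ?_⟩
          intro e he
          have heT : e ∈ T := hT'subT he
          have hceI : c e ∈ I := (hc.2 e heT).1
          have hcej : c e ≠ j := hjun e heT
          constructor
          · refine Finset.mem_sdiff.2 ⟨Finset.mem_erase.2 ⟨hcej, hceI⟩, ?_⟩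
            intro hcf
            rcases Finset.mem_insert.1 hcf with hcf | hcf
            · have : e = (π, x1) := hc.1 (by exact_mod_cast heT) (by exact_mod_cast hπx1T) hcf
              exact hπx1T' (this ▸ he)
            · obtain ⟨f, hf, hfe⟩ := Finset.mem_image.1 hcf
              have : f = e := hc.1 (by exact_mod_cast hTssubT hf) (by exact_mod_cast heT) hfe
              have heTs : e ∈ Ts := this ▸ hf
              exact (Finset.mem_filter.1 he).2 (hTsU e heTs).2
          · exact Finset.mem_filter.2 ⟨(hc.2 e heT).2, (hT'U e he).1, (hT'U e he).2⟩
        have hforests'' : IsForests U' I'' F'' := by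
          intro i hi
          obtain ⟨h1, h2, rk, hrk⟩ := hforests i (hI''subI hi)
          refine ⟨?_, ?_, ⟨rk, fun e he => hrk e (Finset.mem_filter.1 he).1⟩⟩
          · intro e he
            exact (Finset.mem_filter.1 he).2
          · intro v
            calc ((F'' i).filter (fun e => e.2 = v)).card
                ≤ ((F i).filter (fun e => e.2 = v)).card := by
                  apply Finset.card_le_card
                  intro e he
                  obtain ⟨he1, he2⟩ := Finset.mem_filter.1 he
                  exact Finset.mem_filter.2 ⟨(Finset.mem_filter.1 he1).1, he2⟩
              _ ≤ 1 := h2 v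
        have hcount'' : 2 * U'.card ≤ I''.card + 1 := by
          have h1 : (I.erase j).card ≤ I''.card + Cf.card := by
            rw [hI''def]
            exact Finset.card_le_card_sdiff_add_card
          have h2 : (I.erase j).card = I.card - 1 := Finset.card_erase_of_mem hjI
          have h3 : 1 ≤ I.card := Finset.card_pos.2 ⟨j, hjI⟩
          omega
        have hU'n : U'.card ≤ n := by omega
        obtain ⟨T'', c'', ρ'', q, hT''tree, hc''col, hqI'', hqun, hqwin⟩ :=
          IH U' I'' F'' hU'n ⟨ρ, hρU'⟩ hforests'' hcount'' ⟨T', c, ρ, htreeT', hcol'⟩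
        have hqI : q ∈ I := hI''subI hqI''
        have hqj : q ≠ j := Finset.ne_of_mem_erase (Finset.mem_sdiff.1 hqI'').1
        have hqCf : q ∉ Cf := (Finset.mem_sdiff.1 hqI'').2
        have hρ''U' : ρ'' ∈ U' := hT''tree.1
        have hdisj : ∀ v ∈ U', v ∉ S1 := fun v hv => (Finset.mem_sdiff.1 hv).2
        have hdisj' : ∀ v ∈ S1, v ∉ U' := fun v hv hh => hdisj v hh hv
        have hUsplit : U' ∪ S1 = U := Finset.sdiff_union_of_subset hS1U
        have hT''U' : ∀ e ∈ T'', e.1 ∈ U' ∧ e.2 ∈ U' := hT''tree.2.1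
        have hc''I'' : ∀ e ∈ T'', c'' e ∈ I'' := fun e he => (hc''col.2 e he).1
        -- frozen-arc colors lie in Cf
        have hfrozCf : ∀ e, (e ∈ Ts ∨ e = (π, x1)) → c e ∈ Cf := by
          rintro e (he | rfl)
          · exact Finset.mem_insert.2 (Or.inr (Finset.mem_image_of_mem c he))
          · exact Finset.mem_insert_self _ _
        have hI''Cf : ∀ i ∈ I'', i ∉ Cf := fun i hi => (Finset.mem_sdiff.1 hi).2
        -- combined coloring
        set cc : V × V → ι := fun e => if e ∈ T'' then c'' e else c e with hccdef
        have hccT'' : ∀ e ∈ T'', cc e = c'' e := fun e he => if_pos he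
        have hT''Ts : ∀ e ∈ Ts, e ∉ T'' := by
          intro e he hh
          exact hdisj' e.2 (hTsU e he).2 (hT''U' e hh).2
        have hπx1T'' : (π, x1) ∉ T'' := by
          intro hh
          exact hdisj' x1 hx1S (hT''U' _ hh).2
        have hccTs : ∀ e ∈ Ts, cc e = c e := fun e he => if_neg (hT''Ts e he)
        have hccπ : cc (π, x1) = c (π, x1) := if_neg hπx1T''
        -- injectivity of combined coloring on T'' ∪ Ts ∪ {(π,x1)}
        have hinj : ∀ a ∈ insert (π, x1) (T'' ∪ Ts), ∀ b ∈ insert (π, x1) (T'' ∪ Ts),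
            cc a = cc b → a = b := by
          have memcase : ∀ e ∈ insert (π, x1) (T'' ∪ Ts), e ∈ T'' ∨ (e ∈ T ∧ e ∉ T'') := by
            intro e he
            rcases Finset.mem_insert.1 he with rfl | he
            · exact Or.inr ⟨hπx1T, hπx1T''⟩
            rcases Finset.mem_union.1 he with he | he
            · exact Or.inl he
            · exact Or.inr ⟨hTssubT he, hT''Ts e he⟩
          have hccCf : ∀ e ∈ insert (π, x1) (T'' ∪ Ts), e ∉ T'' → cc e ∈ Cf := by
            intro e he hnot
            rcases Finset.mem_insert.1 he with rfl | he
            · rw [hccπ]; exact hfrozCf _ (Or.inr rfl)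
            rcases Finset.mem_union.1 he with he' | he'
            · exact absurd he' hnot
            · rw [hccTs e he']; exact hfrozCf _ (Or.inl he')
          intro a ha b hb heq
          rcases memcase a ha with haT'' | ⟨haT, haT''⟩
          · rcases memcase b hb with hbT'' | ⟨hbT, hbT''⟩
            · exact hc''col.1 (by exact_mod_cast haT'') (by exact_mod_cast hbT'')
                (by rw [hccT'' a haT'', hccT'' b hbT''] at heq; exact heq)
            · exfalso
              have h1 : cc a ∈ I'' := by rw [hccT'' a haT'']; exact hc''I'' a haT''
              have h2 : cc b ∈ Cf := hccCf b hb hbT''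
              exact hI''Cf _ h1 (heq ▸ h2)
          · rcases memcase b hb with hbT'' | ⟨hbT, hbT''⟩
            · exfalso
              have h1 : cc b ∈ I'' := by rw [hccT'' b hbT'']; exact hc''I'' b hbT''
              have h2 : cc a ∈ Cf := hccCf a ha haT''
              exact hI''Cf _ h1 (heq ▸ h2)
            · have hcca : cc a = c a := if_neg haT''
              have hccb : cc b = c b := if_neg hbT''
              exact hc.1 (by exact_mod_cast haT) (by exact_mod_cast hbT)
                (by rw [hcca, hccb] at heq; exact heq)
        -- validity of combined coloring
        have hccvalid : ∀ e ∈ insert (π, x1) (T'' ∪ Ts), cc e ∈ I ∧ e ∈ F (cc e) := by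
          intro e he
          by_cases heT'' : e ∈ T''
          · rw [hccT'' e heT'']
            refine ⟨hI''subI (hc''I'' e heT''), ?_⟩
            have := (hc''col.2 e heT'').2
            exact (Finset.mem_filter.1 this).1
          · have hcc : cc e = c e := if_neg heT''
            have heT : e ∈ T := by
              rcases Finset.mem_insert.1 he with rfl | he
              · exact hπx1T
              rcases Finset.mem_union.1 he with he | he
              · exact absurd he heT''
              · exact hTssubT he
            rw [hcc]
            exact hc.2 e heT
        -- unused colors for the combined coloring
        have hccne : ∀ i', i' ∈ I'' → (∀ e ∈ T'', c'' e ≠ i') →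
            ∀ e ∈ insert (π, x1) (T'' ∪ Ts), cc e ≠ i' := by
          intro i' hi' hi'un e he
          by_cases heT'' : e ∈ T''
          · rw [hccT'' e heT'']; exact hi'un e heT''
          · have hcc : cc e = c e := if_neg heT''
            rcases Finset.mem_insert.1 he with rfl | he
            · rw [hcc]
              intro hh
              exact hI''Cf _ hi' (hh ▸ hfrozCf _ (Or.inr rfl))
            rcases Finset.mem_union.1 he with he | he
            · exact absurd he heT''
            · rw [hcc]
              intro hh
              exact hI''Cf _ hi' (hh ▸ hfrozCf _ (Or.inl he))
        by_cases hgw : ∀ e ∈ F q, e.2 ≠ ρ''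
        · -- the lifted state is a global win
          have htree : IsTreeOn U (insert (π, x1) (T'' ∪ Ts)) ρ'' := by
            have := glue_tree hT''tree htreeTs hdisj hπU'
            rwa [hUsplit] at this
          exact ⟨insert (π, x1) (T'' ∪ Ts), cc, ρ'', q, htree,
            ⟨fun a ha b hb => hinj a (by exact_mod_cast ha) b (by exact_mod_cast hb), hccvalid⟩,
            hqI, hccne q hqI'' hqun, hgw⟩
        · -- swap and recurse
          push_neg at hgw
          obtain ⟨ew, hwF0, hwρ''⟩ := hgw
          set w := ew.1 with hwdef
          have hwF : (w, ρ'') ∈ F q := by rw [← hwρ'']; exact hwF0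
          have hwU : w ∈ U := ((hforests q hqI).1 _ hwF).1
          have hwS1 : w ∈ S1 := by
            by_contra hwS
            have hwU' : w ∈ U' := Finset.mem_sdiff.2 ⟨hwU, hwS⟩
            have : (w, ρ'') ∈ F'' q := Finset.mem_filter.2 ⟨hwF, hwU', hρ''U'⟩
            exact hqwin _ this rfl
          have htreeθ : IsTreeOn U (insert (w, ρ'') (Ts ∪ T'')) x1 := by
            have := glue_tree htreeTs hT''tree hdisj' hwS1
            rwa [Finset.union_comm S1 U', hUsplit] at this
          set cθ : V × V → ι := fun e => if e = (w, ρ'') then q else cc e with hcθdef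
          have hwT'' : (w, ρ'') ∉ T'' := fun hh => hdisj' w hwS1 (hT''U' _ hh).1
          have hwTs : (w, ρ'') ∉ Ts := fun hh => hdisj ρ'' hρ''U' (hTsU _ hh).2
          have hmemθ : ∀ e ∈ insert (w, ρ'') (Ts ∪ T''),
              e = (w, ρ'') ∨ e ∈ insert (π, x1) (T'' ∪ Ts) := by
            intro e he
            rcases Finset.mem_insert.1 he with rfl | he
            · exact Or.inl rfl
            rcases Finset.mem_union.1 he with he | he
            · exact Or.inr (Finset.mem_insert_of_mem (Finset.mem_union_right _ he))
            · exact Or.inr (Finset.mem_insert_of_mem (Finset.mem_union_left _ he))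
          have hccq : ∀ e ∈ insert (π, x1) (T'' ∪ Ts), cc e ≠ q := by
            intro e he
            by_cases heT'' : e ∈ T''
            · rw [hccT'' e heT'']; exact hqun e heT''
            · intro hh
              have h2 : cc e ∈ Cf := by
                rcases Finset.mem_insert.1 he with rfl | he
                · rw [hccπ]; exact hfrozCf _ (Or.inr rfl)
                rcases Finset.mem_union.1 he with he | he
                · exact absurd he heT''
                · rw [hccTs e he]; exact hfrozCf _ (Or.inl he)
              exact hqCf (hh ▸ h2)
          have hinjθ : Set.InjOn cθ ↑(insert (w, ρ'') (Ts ∪ T'')) := by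
            intro a ha b hb heq
            have ha' := hmemθ a (Finset.mem_coe.1 ha)
            have hb' := hmemθ b (Finset.mem_coe.1 hb)
            by_cases haw : a = (w, ρ'')
            · by_cases hbw : b = (w, ρ'')
              · rw [haw, hbw]
              · exfalso
                rcases hb' with hb'' | hb''
                · exact hbw hb''
                have h1 : cθ a = q := if_pos haw
                have h2 : cθ b = cc b := if_neg hbw
                exact hccq b hb'' (by rw [← h2, ← heq, h1])
            · by_cases hbw : b = (w, ρ'')
              · exfalso
                rcases ha' with ha'' | ha''
                · exact haw ha''
                have h1 : cθ b = q := if_pos hbw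
                have h2 : cθ a = cc a := if_neg haw
                exact hccq a ha'' (by rw [← h2, heq, h1])
              · have h1 : cθ a = cc a := if_neg haw
                have h2 : cθ b = cc b := if_neg hbw
                rcases ha' with ha'' | ha''
                · exact absurd ha'' haw
                rcases hb' with hb'' | hb''
                · exact absurd hb'' hbw
                exact hinj a ha'' b hb'' (by rw [← h1, ← h2]; exact heq)
          have hvalθ : ∀ e ∈ insert (w, ρ'') (Ts ∪ T''), cθ e ∈ I ∧ e ∈ F (cθ e) := by
            intro e he
            by_cases hew : e = (w, ρ'')
            · have h1 : cθ e = q := if_pos hew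
              rw [h1, hew]
              exact ⟨hqI, hwF⟩
            · have h1 : cθ e = cc e := if_neg hew
              rcases hmemθ e he with hee | hee
              · exact absurd hee hew
              rw [h1]
              exact hccvalid e hee
          have hjθ : ∀ e ∈ insert (w, ρ'') (Ts ∪ T''), cθ e ≠ j := by
            intro e he
            by_cases hew : e = (w, ρ'')
            · have h1 : cθ e = q := if_pos hew
              rw [h1]; exact hqj
            · have h1 : cθ e = cc e := if_neg hew
              rcases hmemθ e he with hee | hee
              · exact absurd hee hew
              rw [h1]
              by_cases heT'' : e ∈ T''
              · rw [hccT'' e heT'']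
                exact Finset.ne_of_mem_erase (Finset.mem_sdiff.1 (hc''I'' e heT'')).1
              · have h2 : cc e = c e := if_neg heT''
                rw [h2]
                apply hjun
                rcases Finset.mem_insert.1 hee with rfl | hee'
                · exact hπx1T
                rcases Finset.mem_union.1 hee' with hee'' | hee''
                · exact absurd hee'' heT''
                · exact hTssubT hee''
          exact ih (insert (w, ρ'') (Ts ∪ T'')) cθ x1 htreeθ ⟨hinjθ, hvalθ⟩ hjθ (by omega)
    exact inner (rkj ρ0 + 1) T0 c0 ρ0 hT0 hc0
      (fun e he hh => hjnotim (Finset.mem_image.2 ⟨e, he, hh⟩)) (Nat.lt_succ_self _)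

end K3
section Final
variable [DecidableEq V]

lemma singleton_tree (b : V) : IsTreeOn {b} (∅ : Finset (V × V)) b := by
  refine ⟨Finset.mem_singleton_self b, ?_, ?_, ?_, ⟨fun _ => 0, ?_⟩⟩ <;>
    first
    | (intro e he; exact absurd he (Finset.notMem_empty e))
    | (intro v hv hne; exact absurd (Finset.mem_singleton.1 hv) hne)

lemma extend_leaf {U : Finset V} {T : Finset (V × V)} {ρ a b : V}
    (htree : IsTreeOn U T ρ) (ha : a ∈ U) (hb : b ∉ U) :
    IsTreeOn (insert b U) (insert (a, b) T) ρ := by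
  have hdisj : ∀ v ∈ U, v ∉ ({b} : Finset V) := by
    intro v hv hvb
    exact hb ((Finset.mem_singleton.1 hvb) ▸ hv)
  have := glue_tree htree (singleton_tree b) hdisj ha
  rwa [Finset.union_empty, Finset.union_comm U {b}, ← Finset.insert_eq] at this

lemma extend_root {U : Finset V} {T : Finset (V × V)} {ρ b : V}
    (htree : IsTreeOn U T ρ) (hb : b ∉ U) :
    IsTreeOn (insert b U) (insert (b, ρ) T) b := by
  have hdisj : ∀ v ∈ ({b} : Finset V), v ∉ U := by
    intro v hv hvU
    exact hb ((Finset.mem_singleton.1 hv) ▸ hvU)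
  have := glue_tree (singleton_tree b) htree hdisj (Finset.mem_singleton_self b)
  rwa [Finset.empty_union, ← Finset.insert_eq] at this

end Final

theorem stmt14 [Fintype V] [DecidableEq V] (hn : 2 ≤ Fintype.card V)
    (A : Fin (Fintype.card V - 1) → Finset (V × V)) (r : Fin (Fintype.card V - 1) → V)
    (hA : ∀ i, IsSpanningArbor (A i) (r i))
    (k : ℕ) (hk : k ≤ Fintype.card V / 2) :
    ∃ (B : Finset (V × V)) (U : Finset V) (r' : V),
      IsArborOn U B r' ∧ B.card = k ∧ IsRainbowOf A B := by
  classical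
  have h2k : 2 * k ≤ Fintype.card V := by
    have := Nat.div_mul_le_self (Fintype.card V) 2
    have hkk : k * 2 ≤ Fintype.card V / 2 * 2 := Nat.mul_le_mul_right 2 hk
    omega
  -- in-degree bound for the spanning arborescences
  have hAdeg : ∀ (i : Fin (Fintype.card V - 1)) (v : V), ((A i).filter (fun e => e.2 = v)).card ≤ 1 := by
    intro i v
    by_cases hv : v = r i
    · have : (A i).filter (fun e => e.2 = v) = ∅ := by
        apply Finset.filter_eq_empty_iff.2
        intro e he
        exact hv ▸ (hA i).2.2.1 e he
      rw [this]; simp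
    · exact le_of_eq ((hA i).2.2.2.1 v (Finset.mem_univ v) hv)
  -- the main induction
  have main : ∀ j, j ≤ k → ∃ (U : Finset V) (T : Finset (V × V)) (c : V × V → Fin (Fintype.card V - 1)) (ρ : V),
      IsTreeOn U T ρ ∧ Set.InjOn c ↑T ∧ (∀ e ∈ T, e ∈ A (c e)) ∧ T.card = j := by
    intro j
    induction j with
    | zero =>
      intro _
      have : Nonempty V := Fintype.card_pos_iff.1 (by omega)
      obtain ⟨v0⟩ := this
      refine ⟨{v0}, ∅, fun _ => ⟨0, by omega⟩, v0, ?_, ?_, ?_, rfl⟩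
      · exact singleton_tree v0
      · intro a ha; exact absurd ha (by simp)
      · intro e he; exact absurd he (Finset.notMem_empty e)
    | succ j IHj =>
      intro hjk
      obtain ⟨U, T, c, ρ, htree, hinj, hval, hcard⟩ := IHj (by omega)
      have hUcard : U.card = j + 1 := by
        have := tree_card htree
        omega
      -- abstract instance
      set F' : Fin (Fintype.card V - 1) → Finset (V × V) :=
        fun i => (A i).filter (fun e => e.1 ∈ U ∧ e.2 ∈ U) with hF'def
      have hforests : IsForests U (Finset.univ : Finset (Fin (Fintype.card V - 1))) F' := by
        intro i _
        refine ⟨?_, ?_, ?_⟩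
        · intro e he; exact (Finset.mem_filter.1 he).2
        · intro v
          calc ((F' i).filter (fun e => e.2 = v)).card
              ≤ ((A i).filter (fun e => e.2 = v)).card := by
                apply Finset.card_le_card
                intro e he
                obtain ⟨he1, he2⟩ := Finset.mem_filter.1 he
                exact Finset.mem_filter.2 ⟨(Finset.mem_filter.1 he1).1, he2⟩
            _ ≤ 1 := hAdeg i v
        · obtain ⟨rk, hrk⟩ := arbor_rank (hA i)
          exact ⟨rk, fun e he => hrk e (Finset.mem_filter.1 he).1⟩
      have hcount : 2 * U.card ≤ (Finset.univ : Finset (Fin (Fintype.card V - 1))).card + 1 := by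
        rw [Finset.card_univ, Fintype.card_fin]
        omega
      have hstate : ∃ T₀ c₀ ρ₀, IsTreeOn U T₀ ρ₀ ∧
          IsColoring Finset.univ F' T₀ c₀ := by
        refine ⟨T, c, ρ, htree, hinj, ?_⟩
        intro e he
        refine ⟨Finset.mem_univ _, ?_⟩
        exact Finset.mem_filter.2 ⟨hval e he, (htree.2.1 e he).1, (htree.2.1 e he).2⟩
      obtain ⟨T', c', ρ', q, htree', hcol', -, hqun, hqwin⟩ :=
        K3 U.card U Finset.univ F' le_rfl ⟨ρ, htree.1⟩ hforests hcount hstate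
      have hT'val : ∀ e ∈ T', e ∈ A (c' e) := by
        intro e he
        exact (Finset.mem_filter.1 (hcol'.2 e he).2).1
      have hT'card : T'.card = j := by
        have := tree_card htree'
        omega
      have hρ'U : ρ' ∈ U := htree'.1
      -- there is a vertex outside U
      have hout : ∃ b, b ∉ U := by
        by_contra hcon
        push_neg at hcon
        have : (Finset.univ : Finset V) ⊆ U := fun b _ => hcon b
        have := Finset.card_le_card this
        rw [Finset.card_univ] at this
        omega
      -- the new arc with an unused color
      have hext : ∃ (U2 : Finset V) (T2 : Finset (V × V)) (ρ2 : V) (e : V × V),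
          IsTreeOn U2 T2 ρ2 ∧ T2 = insert e T' ∧ e ∉ T' ∧ e ∈ A q := by
        by_cases hcross : ∃ e ∈ A q, e.1 ∈ U ∧ e.2 ∉ U
        · obtain ⟨e, heA, he1, he2⟩ := hcross
          refine ⟨insert e.2 U, insert (e.1, e.2) T', ρ', (e.1, e.2), extend_leaf htree' he1 he2, by simp, ?_, by simpa using heA⟩
          intro hh
          exact he2 (htree'.2.1 _ hh).2
        · -- no crossing arc: the root of A q is outside U, extend at ρ'
          have hrqU : r q ∉ U := by
            intro hrq
            obtain ⟨b, hb⟩ := hout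
            obtain ⟨e, heA, he1, he2⟩ :=
              crossing_arc ((hA q).2.2.2.2 b (Finset.mem_univ b)) hrq hb
            exact hcross ⟨e, heA, he1, he2⟩
          have hρ'r : ρ' ≠ r q := fun hh => hrqU (hh ▸ hρ'U)
          obtain ⟨a0, ha0A, -⟩ :=
            in_arc_deg ((hA q).2.2.2.1 ρ' (Finset.mem_univ ρ') hρ'r)
          have ha0U : a0 ∉ U := by
            intro ha0
            have : (a0, ρ') ∈ F' q := Finset.mem_filter.2 ⟨ha0A, ha0, hρ'U⟩
            exact hqwin _ this rfl
          refine ⟨insert a0 U, insert (a0, ρ') T', a0, (a0, ρ'),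
            extend_root htree' ha0U, rfl, ?_, ha0A⟩
          intro hh
          exact ha0U (htree'.2.1 _ hh).1
      obtain ⟨U2, T2, ρ2, e, htree2, hT2, heT', heA⟩ := hext
      set c2 : V × V → Fin (Fintype.card V - 1) := fun f => if f = e then q else c' f with hc2def
      refine ⟨U2, T2, c2, ρ2, htree2, ?_, ?_, ?_⟩
      · -- injectivity
        intro a ha b hb heq
        rw [hT2] at ha hb
        have ha' := Finset.mem_insert.1 (Finset.mem_coe.1 ha)
        have hb' := Finset.mem_insert.1 (Finset.mem_coe.1 hb)
        by_cases hae : a = e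
        · by_cases hbe : b = e
          · rw [hae, hbe]
          · exfalso
            rcases hb' with hb'' | hb''
            · exact hbe hb''
            have h1 : c2 a = q := if_pos hae
            have h2 : c2 b = c' b := if_neg hbe
            exact hqun b hb'' (by rw [← h2, ← heq, h1])
        · by_cases hbe : b = e
          · exfalso
            rcases ha' with ha'' | ha''
            · exact hae ha''
            have h1 : c2 b = q := if_pos hbe
            have h2 : c2 a = c' a := if_neg hae
            exact hqun a ha'' (by rw [← h2, heq, h1])
          · rcases ha' with ha'' | ha''
            · exact absurd ha'' hae
            rcases hb' with hb'' | hb''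
            · exact absurd hb'' hbe
            have h1 : c2 a = c' a := if_neg hae
            have h2 : c2 b = c' b := if_neg hbe
            exact hcol'.1 (by exact_mod_cast ha'') (by exact_mod_cast hb'')
              (by rw [← h1, ← h2]; exact heq)
      · -- validity
        intro f hf
        rw [hT2] at hf
        rcases Finset.mem_insert.1 hf with rfl | hf'
        · have h1 : c2 f = q := if_pos rfl
          rw [h1]; exact heA
        · by_cases hfe : f = e
          · exact absurd (hfe ▸ hf') heT'
          · have h1 : c2 f = c' f := if_neg hfe
            rw [h1]; exact hT'val f hf'
      · -- cardinality
        rw [hT2, Finset.card_insert_of_notMem heT', hT'card]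
  obtain ⟨U, T, c, ρ, htree, hinj, hval, hcard⟩ := main k le_rfl
  exact ⟨T, U, ρ, ⟨htree.1, htree.2.1, htree.2.2.1, htree.2.2.2.1, reach_of_tree htree⟩,
    hcard, c, hinj, hval⟩
end
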